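/- arXiv:1901.08168 — 15 statements merged into one kernel-verified Lean document; each statement's English description precedes it below -/
import Mathlib

section
/- Let λ > 0, X ∈ ℝ^{m×n}, W₁ ∈ ℝ^{k×m}, W₂ ∈ ℝ^{m×k}. If (W₁, W₂) is a critical point of the sum loss L_σ, i.e. W₂ᵀ(W₂W₁ − I_m)XXᵀ + λW₁ = 0 and (W₂W₁ − I_m)XXᵀW₁ᵀ + λW₂ = 0, then W₁ = W₂ᵀ. (Transpose Theorem) -/
open Matrix
set_option maxHeartbeats 1000000

private lemma eq_zero_of_mulVec_zero {a b : ℕ} (N : Matrix (Fin a) (Fin b) ℝ)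
    (h : ∀ x, N *ᵥ x = 0) : N = 0 := by
  ext i j
  have := congrFun (h (Pi.single j 1)) i
  simpa [Matrix.mulVec_single] using this

private lemma cancel_left {a b : ℕ} (M : Matrix (Fin a) (Fin a) ℝ) (N : Matrix (Fin a) (Fin b) ℝ)
    (hM : ∀ x, M *ᵥ x = 0 → x = 0) (h : M * N = 0) : N = 0 := by
  apply eq_zero_of_mulVec_zero
  intro x
  apply hM
  rw [Matrix.mulVec_mulVec, h, Matrix.zero_mulVec]

private lemma dot_self_nonneg {p : ℕ} (v : Fin p → ℝ) : 0 ≤ v ⬝ᵥ v :=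
  Finset.sum_nonneg fun i _ => mul_self_nonneg _

private lemma quad_eq {a b : ℕ} (N : Matrix (Fin a) (Fin b) ℝ) (x : Fin a → ℝ) :
    x ⬝ᵥ (N * Nᵀ) *ᵥ x = (Nᵀ *ᵥ x) ⬝ᵥ (Nᵀ *ᵥ x) := by
  rw [← Matrix.mulVec_mulVec, Matrix.dotProduct_mulVec, ← Matrix.mulVec_transpose]

private lemma quad_nonneg {a b : ℕ} (N : Matrix (Fin a) (Fin b) ℝ) (x : Fin a → ℝ) :
    0 ≤ x ⬝ᵥ (N * Nᵀ) *ᵥ x := by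
  rw [quad_eq]; exact dot_self_nonneg _

/-- **Transpose Theorem.** At any critical point of the L2-regularized (sum-loss)
linear autoencoder, the encoder is the transpose of the decoder. -/
theorem transpose_theorem {m n k : ℕ} (lam : ℝ) (hlam : 0 < lam)
    (X : Matrix (Fin m) (Fin n) ℝ)
    (W1 : Matrix (Fin k) (Fin m) ℝ) (W2 : Matrix (Fin m) (Fin k) ℝ)
    (h1 : W2ᵀ * (W2 * W1 - 1) * (X * Xᵀ) + lam • W1 = 0)
    (h2 : (W2 * W1 - 1) * (X * Xᵀ) * W1ᵀ + lam • W2 = 0) :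
    W1 = W2ᵀ := by
  have hlam' : lam ≠ 0 := ne_of_gt hlam
  set S : Matrix (Fin m) (Fin m) ℝ := X * Xᵀ with hSdef
  have hS : Sᵀ = S := by rw [hSdef, transpose_mul, transpose_transpose]
  -- Gram identity W1 W1ᵀ = W2ᵀ W2
  have g1 := congrArg (fun M => M * W1ᵀ) h1
  have g2 := congrArg (fun M => W2ᵀ * M) h2
  simp only [Matrix.add_mul, Matrix.zero_mul, Matrix.smul_mul, Matrix.mul_assoc] at g1
  simp only [Matrix.mul_add, Matrix.mul_zero, Matrix.mul_smul, Matrix.mul_assoc] at g2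
  have hGram : W1 * W1ᵀ = W2ᵀ * W2 := by
    have h : lam • (W1 * W1ᵀ) = lam • (W2ᵀ * W2) := add_left_cancel (g1.trans g2.symm)
    exact smul_right_injective _ hlam' h
  -- transpose of h2
  have e2 := congrArg Matrix.transpose h2
  simp only [transpose_add, transpose_mul, transpose_smul, transpose_sub, transpose_one,
    transpose_transpose, transpose_zero, hS, Matrix.mul_sub, Matrix.sub_mul, Matrix.mul_one,
    Matrix.one_mul, Matrix.mul_assoc] at e2
  -- e2 : W1 * (S * (W1ᵀ * W2ᵀ)) - W1 * S + lam • W2ᵀ = 0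
  -- expanded h1
  have h1e : W2ᵀ * (W2 * (W1 * S)) - W2ᵀ * S + lam • W1 = 0 := by
    simpa only [Matrix.mul_sub, Matrix.sub_mul, Matrix.mul_one, Matrix.one_mul,
      Matrix.mul_assoc] using h1
  have E1g : W1 * (W1ᵀ * (W1 * S)) - W2ᵀ * S + lam • W1 = 0 := by
    rw [← Matrix.mul_assoc W1 W1ᵀ (W1 * S), hGram, Matrix.mul_assoc]
    exact h1e
  -- key factorized identity
  have expand :
      W1 * ((lam • (1 : Matrix (Fin m) (Fin m) ℝ) + S * (W1ᵀ * W1) - S) *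
          (lam • (1 : Matrix (Fin m) (Fin m) ℝ) + W1ᵀ * W1 * S + S))
        = (lam • (1 : Matrix (Fin k) (Fin k) ℝ) + W1 * S * W1ᵀ) *
            (W1 * (W1ᵀ * (W1 * S)) - W2ᵀ * S + lam • W1)
          + (W1 * (S * (W1ᵀ * W2ᵀ)) - W1 * S + lam • W2ᵀ) * S := by
    simp only [Matrix.mul_add, Matrix.add_mul, Matrix.mul_sub, Matrix.sub_mul, Matrix.smul_mul,
      Matrix.mul_smul, smul_smul, Matrix.mul_one, Matrix.one_mul, Matrix.mul_assoc]
    module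
  have hKey : (W1 * (lam • (1 : Matrix (Fin m) (Fin m) ℝ) + S * (W1ᵀ * W1) - S)) *
      (lam • (1 : Matrix (Fin m) (Fin m) ℝ) + W1ᵀ * W1 * S + S) = 0 := by
    rw [Matrix.mul_assoc, expand, E1g, e2]
    simp
  -- kernel of (lam•1 + S Q + S)
  have hkerR : ∀ x : Fin m → ℝ,
      (lam • (1 : Matrix (Fin m) (Fin m) ℝ) + S * (W1ᵀ * W1) + S) *ᵥ x = 0 → x = 0 := by
    intro x hx
    have hx2 : lam • x + (S * (W1ᵀ * W1)) *ᵥ x + S *ᵥ x = 0 := by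
      simpa only [Matrix.add_mulVec, Matrix.smul_mulVec, Matrix.one_mulVec] using hx
    set y : Fin m → ℝ := x + (W1ᵀ * W1) *ᵥ x with hy
    have hx' : lam • x + S *ᵥ y = 0 := by
      rw [hy, Matrix.mulVec_add, Matrix.mulVec_mulVec]
      calc lam • x + (S *ᵥ x + (S * (W1ᵀ * W1)) *ᵥ x)
          = lam • x + (S * (W1ᵀ * W1)) *ᵥ x + S *ᵥ x := by abel
        _ = 0 := hx2
    have h0 : lam * (y ⬝ᵥ x) + y ⬝ᵥ S *ᵥ y = 0 := by
      have := congrArg (fun v => y ⬝ᵥ v) hx'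
      simpa only [dotProduct_add, dotProduct_smul, dotProduct_zero, smul_eq_mul] using this
    have hq1 : 0 ≤ y ⬝ᵥ S *ᵥ y := by rw [hSdef]; exact quad_nonneg X y
    have hq2 : x ⬝ᵥ (W1ᵀ * W1) *ᵥ x = (W1 *ᵥ x) ⬝ᵥ (W1 *ᵥ x) := by
      have := quad_eq W1ᵀ x
      rwa [transpose_transpose] at this
    have hyx : y ⬝ᵥ x = x ⬝ᵥ x + x ⬝ᵥ (W1ᵀ * W1) *ᵥ x := by
      rw [hy, add_dotProduct, dotProduct_comm ((W1ᵀ * W1) *ᵥ x) x]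
    have hxx : 0 ≤ x ⬝ᵥ x := dot_self_nonneg x
    have hwx : 0 ≤ (W1 *ᵥ x) ⬝ᵥ (W1 *ᵥ x) := dot_self_nonneg _
    have hzero : x ⬝ᵥ x = 0 := by nlinarith
    exact dotProduct_self_eq_zero.mp hzero
  -- cancel the invertible right factor
  have hW1L : W1 * (lam • (1 : Matrix (Fin m) (Fin m) ℝ) + S * (W1ᵀ * W1) - S) = 0 := by
    have ht := congrArg Matrix.transpose hKey
    rw [transpose_mul, transpose_zero] at ht
    have htr : (lam • (1 : Matrix (Fin m) (Fin m) ℝ) + W1ᵀ * W1 * S + S)ᵀ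
        = lam • (1 : Matrix (Fin m) (Fin m) ℝ) + S * (W1ᵀ * W1) + S := by
      simp [transpose_add, transpose_smul, transpose_one, transpose_mul, hS, Matrix.mul_assoc]
    rw [htr] at ht
    have h3 := cancel_left _ _ hkerR ht
    exact Matrix.transpose_eq_zero.mp h3
  -- conclude (lam•1 + W) W1 = W1 S = (lam•1 + W) W2ᵀ
  have hW1Ld : lam • W1 + W1 * (S * (W1ᵀ * W1)) - W1 * S = 0 := by
    simpa only [Matrix.mul_add, Matrix.mul_sub, Matrix.mul_smul, Matrix.mul_one,
      Matrix.mul_assoc] using hW1L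
  have hfin1 : (lam • (1 : Matrix (Fin k) (Fin k) ℝ) + W1 * S * W1ᵀ) * W1 = W1 * S := by
    have : (lam • (1 : Matrix (Fin k) (Fin k) ℝ) + W1 * S * W1ᵀ) * W1 - W1 * S
        = lam • W1 + W1 * (S * (W1ᵀ * W1)) - W1 * S := by
      simp only [Matrix.add_mul, Matrix.smul_mul, Matrix.one_mul, Matrix.mul_assoc]
    rw [← sub_eq_zero, this, hW1Ld]
  have hfin2 : (lam • (1 : Matrix (Fin k) (Fin k) ℝ) + W1 * S * W1ᵀ) * W2ᵀ = W1 * S := by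
    have h5 : (lam • (1 : Matrix (Fin k) (Fin k) ℝ) + W1 * S * W1ᵀ) * W2ᵀ - W1 * S
        = W1 * (S * (W1ᵀ * W2ᵀ)) - W1 * S + lam • W2ᵀ := by
      simp only [Matrix.add_mul, Matrix.smul_mul, Matrix.one_mul, Matrix.mul_assoc]
      abel
    rw [← sub_eq_zero, h5, e2]
  have hsub : (lam • (1 : Matrix (Fin k) (Fin k) ℝ) + W1 * S * W1ᵀ) * (W1 - W2ᵀ) = 0 := by
    rw [Matrix.mul_sub, hfin1, hfin2, sub_self]
  have hkerK : ∀ x : Fin k → ℝ,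
      (lam • (1 : Matrix (Fin k) (Fin k) ℝ) + W1 * S * W1ᵀ) *ᵥ x = 0 → x = 0 := by
    intro x hx
    have hrw : W1 * S * W1ᵀ = (W1 * X) * (W1 * X)ᵀ := by
      rw [hSdef, transpose_mul]
      simp [Matrix.mul_assoc]
    rw [hrw] at hx
    have hdot := congrArg (fun v => x ⬝ᵥ v) hx
    simp only [Matrix.add_mulVec, Matrix.smul_mulVec, Matrix.one_mulVec, dotProduct_add,
      dotProduct_smul, smul_eq_mul, dotProduct_zero] at hdot
    have hq := quad_nonneg (W1 * X) x
    have hxx : 0 ≤ x ⬝ᵥ x := dot_self_nonneg x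
    have hzero : x ⬝ᵥ x = 0 := by nlinarith
    exact dotProduct_self_eq_zero.mp hzero
  have hfinal := cancel_left _ _ hkerK hsub
  exact sub_eq_zero.mp hfinal
end

section
/- Let λ > 0, X ∈ ℝ^{m×n}, W₁ ∈ ℝ^{k×m}, W₂ ∈ ℝ^{m×k}. If (W₁, W₂) is a critical point of the sum loss L_σ, i.e. W₂ᵀ(W₂W₁ − I_m)XXᵀ + λW₁ = 0 and (W₂W₁ − I_m)XXᵀW₁ᵀ + λW₂ = 0, then the matrix C = (I_m − W₂W₁)XXᵀ is symmetric and positive semidefinite. -/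
/-!
Write `S = XXᵀ` and `C = (I - W₂W₁)S`. The second critical-point equation says `CW₁ᵀ = λW₂`,
hence `C(λI + W₁ᵀW₁S) = λC + λW₂W₁S = λS`. For positive semidefinite `A`, `B` and `c > 0` the
matrix `T = cI + AB` is invertible, and `CT = cB` gives `TᴴCT = c(cB + BAB)`, which is positive
semidefinite; conjugating back by `T⁻¹` shows that `C` is.
-/

open Matrix
open scoped ComplexOrder

namespace Matrix

variable {n 𝕜 : Type*} [Fintype n] [DecidableEq n] [RCLike 𝕜]

theorem isUnit_smul_one_add_mul_of_posSemidef {A B : Matrix n n 𝕜} (hA : A.PosSemidef)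
    (hB : B.PosSemidef) {c : ℝ} (hc : 0 < c) : IsUnit (c • 1 + A * B) := by
  refine mulVec_injective_iff_isUnit.mp <| (injective_iff_map_eq_zero (mulVecLin _)).mpr
    fun v hv => ?_
  simp only [mulVecLin_apply, add_mulVec, smul_mulVec, one_mulVec, ← mulVec_mulVec] at hv
  -- pairing with `B v` splits `0` into two nonnegative parts
  have hsplit : c • (star v ⬝ᵥ B *ᵥ v) + star (B *ᵥ v) ⬝ᵥ A *ᵥ (B *ᵥ v) = 0 := by
    have hdual : star (B *ᵥ v) ⬝ᵥ v = star v ⬝ᵥ B *ᵥ v := by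
      rw [star_mulVec, ← dotProduct_mulVec, hB.isHermitian.eq]
    simpa only [dotProduct_add, dotProduct_smul, dotProduct_zero, hdual]
      using congrArg (star (B *ᵥ v) ⬝ᵥ ·) hv
  have hBv : B *ᵥ v = 0 := by
    rw [← hB.dotProduct_mulVec_zero_iff]
    have h1 := smul_nonneg hc.le (hB.dotProduct_mulVec_nonneg v)
    have h2 := hA.dotProduct_mulVec_nonneg (B *ᵥ v)
    exact (smul_eq_zero.mp ((add_eq_zero_iff_of_nonneg h1 h2).mp hsplit).1).resolve_left hc.ne'
  rw [hBv, mulVec_zero, add_zero] at hv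
  exact (smul_eq_zero.mp hv).resolve_left hc.ne'

theorem PosSemidef.of_mul_smul_one_add_mul_eq {A B C : Matrix n n 𝕜} (hA : A.PosSemidef)
    (hB : B.PosSemidef) {c : ℝ} (hc : 0 < c) (hC : C * (c • 1 + A * B) = c • B) :
    C.PosSemidef := by
  have hT := isUnit_smul_one_add_mul_of_posSemidef hA hB hc
  rw [← hT.posSemidef_star_left_conjugate_iff, mul_assoc, hC]
  have hBAB : (B * A * B).PosSemidef := by
    simpa only [hB.isHermitian.eq] using hA.conjTranspose_mul_mul_same B
  have hTstar : star (c • 1 + A * B) = c • 1 + B * A := by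
    rw [star_eq_conjTranspose, conjTranspose_add, conjTranspose_smul, conjTranspose_one,
      conjTranspose_mul, hA.isHermitian.eq, hB.isHermitian.eq, star_trivial]
  rw [hTstar, mul_smul_comm, add_mul, smul_mul_assoc, one_mul]
  exact ((hB.smul hc.le).add hBAB).smul hc.le

end Matrix

theorem C_posSemidef_general {m n k : ℕ} (lam : ℝ) (hlam : 0 < lam)
    (X : Matrix (Fin m) (Fin n) ℝ)
    (W1 : Matrix (Fin k) (Fin m) ℝ) (W2 : Matrix (Fin m) (Fin k) ℝ)
    (h2 : (W2 * W1 - 1) * (X * Xᵀ) * W1ᵀ + lam • W2 = 0) :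
    ((1 - W2 * W1) * (X * Xᵀ)).PosSemidef := by
  have hS : (X * Xᵀ).PosSemidef := by
    simpa only [conjTranspose_eq_transpose_of_trivial] using posSemidef_self_mul_conjTranspose X
  have hD : (W1ᵀ * W1).PosSemidef := by
    simpa only [conjTranspose_eq_transpose_of_trivial] using posSemidef_conjTranspose_mul_self W1
  have hW2 : (1 - W2 * W1) * (X * Xᵀ) * W1ᵀ = lam • W2 := by
    rw [← neg_sub, Matrix.neg_mul, Matrix.neg_mul, neg_eq_iff_add_eq_zero, h2]
  refine hD.of_mul_smul_one_add_mul_eq hS hlam ?_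
  calc (1 - W2 * W1) * (X * Xᵀ) * (lam • 1 + W1ᵀ * W1 * (X * Xᵀ))
      = lam • ((1 - W2 * W1) * (X * Xᵀ)) + (1 - W2 * W1) * (X * Xᵀ) * W1ᵀ * (W1 * (X * Xᵀ)) := by
        simp only [mul_add, mul_smul_comm, mul_one, Matrix.mul_assoc]
    _ = lam • (X * Xᵀ) := by
        rw [hW2, Matrix.smul_mul, ← smul_add, sub_mul, one_mul, Matrix.mul_assoc, sub_add_cancel]

/-- At any critical point of the sum loss `L_σ`, the matrix
`C = (I - W₂W₁)XXᵀ` is symmetric positive semidefinite. -/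
theorem C_posSemidef {m n k : ℕ} (lam : ℝ) (hlam : 0 < lam)
    (X : Matrix (Fin m) (Fin n) ℝ)
    (W1 : Matrix (Fin k) (Fin m) ℝ) (W2 : Matrix (Fin m) (Fin k) ℝ)
    (h1 : W2ᵀ * (W2 * W1 - 1) * (X * Xᵀ) + lam • W1 = 0)
    (h2 : (W2 * W1 - 1) * (X * Xᵀ) * W1ᵀ + lam • W2 = 0) :
    ((1 - W2 * W1) * (X * Xᵀ)).PosSemidef :=
  C_posSemidef_general lam hlam X W1 W2 h2
end

section
/- Let A ∈ ℝ^{n×n} satisfy (det A)² = 1. Then ‖A‖_F² ≥ n, with equality if and only if A is orthogonal (AᵀA = I_n). In other words, orthogonal matrices are exactly the matrices of minimal Frobenius norm among real square matrices with determinant ±1. -/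
/-!
The Gram matrix `AᵀA` is positive semidefinite with determinant `(det A)² = 1`, so its
eigenvalues `λᵢ` are positive with `∏ λᵢ = 1`, and `‖A‖_F² = tr(AᵀA) = ∑ λᵢ`. Since
`t - 1 - log t ≥ 0` with equality only at `t = 1`, and `∑ log λᵢ = 0`, we get `∑ λᵢ ≥ n`
with equality iff every `λᵢ = 1`, i.e. iff `AᵀA = 1` by the spectral theorem.
-/

open Matrix

lemma Real.sub_one_sub_log_nonneg {t : ℝ} (ht : 0 < t) : 0 ≤ t - 1 - Real.log t := by
  linarith [Real.log_le_sub_one_of_pos ht]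

lemma Real.sub_one_sub_log_eq_zero_iff {t : ℝ} (ht : 0 < t) : t - 1 - Real.log t = 0 ↔ t = 1 := by
  refine ⟨fun h ↦ by_contra fun hne ↦ ?_, fun h ↦ by simp [h]⟩
  linarith [Real.log_lt_sub_one_of_pos ht hne]

section ProdEqOne

variable {ι : Type*} [Fintype ι] {x : ι → ℝ}

lemma sum_sub_card_eq_sum_sub_one_sub_log (hx : ∀ i, 0 < x i) (hprod : ∏ i, x i = 1) :
    ∑ i, x i - Fintype.card ι = ∑ i, (x i - 1 - Real.log (x i)) := by
  have hlog : ∑ i, Real.log (x i) = 0 := by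
    rw [← Real.log_prod fun i _ ↦ (hx i).ne', hprod, Real.log_one]
  simp [Finset.sum_sub_distrib, hlog]

lemma card_le_sum_of_prod_eq_one (hx : ∀ i, 0 < x i) (hprod : ∏ i, x i = 1) :
    (Fintype.card ι : ℝ) ≤ ∑ i, x i := by
  have hgap := sum_sub_card_eq_sum_sub_one_sub_log hx hprod
  exact sub_nonneg.mp <| hgap ▸ Finset.sum_nonneg fun i _ ↦ Real.sub_one_sub_log_nonneg (hx i)

lemma sum_eq_card_iff_of_prod_eq_one (hx : ∀ i, 0 < x i) (hprod : ∏ i, x i = 1) :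
    ∑ i, x i = Fintype.card ι ↔ ∀ i, x i = 1 := by
  rw [← sub_eq_zero, sum_sub_card_eq_sum_sub_one_sub_log hx hprod,
    Finset.sum_eq_zero_iff_of_nonneg fun i _ ↦ Real.sub_one_sub_log_nonneg (hx i)]
  simp [Real.sub_one_sub_log_eq_zero_iff (hx _)]

end ProdEqOne

lemma Matrix.IsHermitian.eq_one_of_eigenvalues_eq_one {𝕜 n : Type*} [RCLike 𝕜] [Fintype n]
    [DecidableEq n] {A : Matrix n n 𝕜} (hA : A.IsHermitian) (h : hA.eigenvalues = 1) : A = 1 := by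
  rw [hA.spectral_theorem, h]
  simp

namespace Matrix.PosSemidef

variable {n : Type*} [Fintype n] [DecidableEq n] {M : Matrix n n ℝ}

lemma prod_eigenvalues_eq_one (hM : M.PosSemidef) (hdet : M.det = 1) :
    ∏ i, hM.1.eigenvalues i = 1 := by
  simpa [hM.1.det_eq_prod_eigenvalues] using hdet

lemma eigenvalues_pos_of_det_eq_one (hM : M.PosSemidef) (hdet : M.det = 1) (i : n) :
    0 < hM.1.eigenvalues i :=
  (hM.posDef_iff_det_ne_zero.mpr (by simp [hdet])).eigenvalues_pos i

lemma trace_eq_sum_eigenvalues (hM : M.PosSemidef) : M.trace = ∑ i, hM.1.eigenvalues i := by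
  simpa using hM.1.trace_eq_sum_eigenvalues

lemma card_le_trace_of_det_eq_one (hM : M.PosSemidef) (hdet : M.det = 1) :
    (Fintype.card n : ℝ) ≤ M.trace :=
  hM.trace_eq_sum_eigenvalues ▸ card_le_sum_of_prod_eq_one
    (hM.eigenvalues_pos_of_det_eq_one hdet) (hM.prod_eigenvalues_eq_one hdet)

lemma trace_eq_card_iff_of_det_eq_one (hM : M.PosSemidef) (hdet : M.det = 1) :
    M.trace = Fintype.card n ↔ M = 1 := by
  refine ⟨fun h ↦ hM.1.eq_one_of_eigenvalues_eq_one (funext ?_), fun h ↦ by simp [h]⟩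
  rw [hM.trace_eq_sum_eigenvalues] at h
  exact (sum_eq_card_iff_of_prod_eq_one (hM.eigenvalues_pos_of_det_eq_one hdet)
    (hM.prod_eigenvalues_eq_one hdet)).mp h

end Matrix.PosSemidef

/-- Orthogonal matrices are exactly the matrices of minimal Frobenius norm
among real square matrices with determinant ±1:
if `(det A)² = 1` then `‖A‖_F² = tr(AᵀA) ≥ n`, with equality iff `AᵀA = I`. -/
theorem orthogonal_min_frobenius {n : ℕ} (A : Matrix (Fin n) (Fin n) ℝ)
    (h : A.det ^ 2 = 1) :
    (n : ℝ) ≤ Matrix.trace (Aᵀ * A) ∧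
      (Matrix.trace (Aᵀ * A) = (n : ℝ) ↔ Aᵀ * A = 1) := by
  have hpsd : (Aᵀ * A).PosSemidef := by simpa using posSemidef_conjTranspose_mul_self A
  have hdet : (Aᵀ * A).det = 1 := by rw [det_mul, det_transpose, ← sq, h]
  exact ⟨by simpa using hpsd.card_le_trace_of_det_eq_one hdet,
    by simpa using hpsd.trace_eq_card_iff_of_det_eq_one hdet⟩
end

section
/- Let A, B ∈ ℝ^{m×m} with A symmetric positive semidefinite. If ABᵀ − BABᵀ is symmetric positive semidefinite, then A − BA is symmetric positive semidefinite. (Equivalently: if A ⪰ 0 and ABᵀ ⪰ BABᵀ in the Loewner order, then A ⪰ BA.) -/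
open Matrix

/-- If `A ⪰ 0` and `ABᵀ ⪰ BABᵀ` in the Loewner order, then `A ⪰ BA`. -/
theorem loewner_cancel {m : ℕ} (A B : Matrix (Fin m) (Fin m) ℝ)
    (hA : A.PosSemidef) (h : (A * Bᵀ - B * A * Bᵀ).PosSemidef) :
    (A - B * A).PosSemidef := by
  have key : A - B * A = (A * Bᵀ - B * A * Bᵀ) + (1 - B) * A * (1 - B)ᵀ := by
    simp [Matrix.sub_mul, Matrix.mul_sub, Matrix.transpose_sub, Matrix.transpose_one]
  rw [key]
  have h2 := hA.mul_mul_conjTranspose_same (1 - B)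
  rw [conjTranspose_eq_transpose_of_trivial] at h2
  exact h.add h2
end

section
/- Let D, S ∈ ℝ^{m×m} be diagonal with S invertible, and suppose the diagonal entries of D²S⁻²D² (i.e. the values dᵢ⁴/sᵢ², where dᵢ, sᵢ are the diagonal entries of D, S) are pairwise distinct and nonzero. Let Q₁ ∈ ℝ^{k×m}, Q₂ ∈ ℝ^{m×k} satisfy the critical-point equations of L_*(Q₁,Q₂) = tr(Q₂Q₁S²Q₁ᵀQ₂ᵀ − 2Q₂Q₁D²), namely Q₂ᵀQ₂Q₁S² = Q₂ᵀD² and Q₂Q₁S²Q₁ᵀ = D²Q₁ᵀ. Then there exists an index set 𝓘 ⊆ {1,…,m} with |𝓘| ≤ k such that Q₂Q₁ is the diagonal matrix whose i-th diagonal entry equals dᵢ²/sᵢ² for i ∈ 𝓘 and 0 otherwise. -/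
open Matrix

/-- Critical points of `L_*(Q₁,Q₂) = tr(Q₂Q₁S²Q₁ᵀQ₂ᵀ − 2Q₂Q₁D²)` for diagonal
`D, S` with `S` invertible and the diagonal entries `dᵢ⁴/sᵢ²` of `D²S⁻²D²`
pairwise distinct and nonzero: the product `Q₂Q₁` is the diagonal matrix with
entries `dᵢ²/sᵢ²` on an index set `𝓘` of size at most `k` and `0` elsewhere. -/
theorem diagonal_critical_points {m k : ℕ} (d s : Fin m → ℝ)
    (hs : ∀ i, s i ≠ 0)
    (hnz : ∀ i, d i ^ 4 / s i ^ 2 ≠ 0)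
    (hdist : ∀ i j : Fin m, i ≠ j → d i ^ 4 / s i ^ 2 ≠ d j ^ 4 / s j ^ 2)
    (Q1 : Matrix (Fin k) (Fin m) ℝ) (Q2 : Matrix (Fin m) (Fin k) ℝ)
    (h1 : Q2ᵀ * Q2 * Q1 * Matrix.diagonal (fun i => s i ^ 2) =
          Q2ᵀ * Matrix.diagonal (fun i => d i ^ 2))
    (h2 : Q2 * Q1 * Matrix.diagonal (fun i => s i ^ 2) * Q1ᵀ =
          Matrix.diagonal (fun i => d i ^ 2) * Q1ᵀ) :
    ∃ I : Finset (Fin m), I.card ≤ k ∧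
      Q2 * Q1 = Matrix.diagonal (fun i => if i ∈ I then d i ^ 2 / s i ^ 2 else 0) := by
  classical
  have hd : ∀ i, d i ≠ 0 := by
    intro i hi
    exact hnz i (by simp [hi])
  set W : Matrix (Fin m) (Fin m) ℝ := Q2 * Q1 with hW
  have e5 : W * Matrix.diagonal (fun i => s i ^ 2) * Wᵀ
      = Matrix.diagonal (fun i => d i ^ 2) * Wᵀ := by
    have h := congrArg (· * Q2ᵀ) h2
    simp only [hW, transpose_mul, ← Matrix.mul_assoc] at h ⊢
    exact h
  have e4' : Wᵀ * W * Matrix.diagonal (fun i => s i ^ 2)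
      = Wᵀ * Matrix.diagonal (fun i => d i ^ 2) := by
    have h := congrArg (Q1ᵀ * ·) h1
    simp only [hW, transpose_mul, ← Matrix.mul_assoc] at h ⊢
    exact h
  have e3 : Matrix.diagonal (fun i => d i ^ 2) * Wᵀ
      = W * Matrix.diagonal (fun i => d i ^ 2) := by
    have h := congrArg Matrix.transpose e5
    have h' := e5
    simp only [hW, transpose_mul, transpose_transpose, Matrix.diagonal_transpose,
      ← Matrix.mul_assoc] at h h' ⊢
    rw [← h']
    exact h
  have e4 : Matrix.diagonal (fun i => s i ^ 2) * Wᵀ * W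
      = Matrix.diagonal (fun i => d i ^ 2) * W := by
    have h := congrArg Matrix.transpose e4'
    simp only [hW, transpose_mul, transpose_transpose, Matrix.diagonal_transpose,
      ← Matrix.mul_assoc] at h ⊢
    exact h
  -- entrywise consequences
  have a1 : ∀ i j, d i ^ 2 * W j i = W i j * d j ^ 2 := by
    intro i j
    have := congrFun (congrFun e3 i) j
    simpa [Matrix.mul_apply, Matrix.diagonal_apply, Finset.sum_ite_eq,
      Finset.sum_ite_eq'] using this
  have a4 : ∀ i j, s i ^ 2 * ∑ l, W l i * W l j = d i ^ 2 * W i j := by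
    intro i j
    have := congrFun (congrFun e4 i) j
    simp only [Matrix.mul_apply, Matrix.diagonal_apply, Matrix.transpose_apply,
      ite_mul, mul_ite, zero_mul, mul_zero, Finset.sum_ite_eq, Finset.sum_ite_eq',
      Finset.mem_univ, if_true] at this
    rw [← this, Finset.mul_sum]
    exact Finset.sum_congr rfl fun l _ => (mul_assoc _ _ _).symm
  have a4' : ∀ i j, (∑ l, W l i * W l j) * s j ^ 2 = W j i * d j ^ 2 := by
    intro i j
    have := congrFun (congrFun e4' i) j
    simpa only [Matrix.mul_apply, Matrix.diagonal_apply, Matrix.transpose_apply,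
      ite_mul, mul_ite, zero_mul, mul_zero, Finset.sum_ite_eq, Finset.sum_ite_eq',
      Finset.mem_univ, if_true] using this
  -- off-diagonal vanishing
  have hoff : ∀ i j, i ≠ j → W i j = 0 := by
    intro i j hij
    have hx : s j ^ 2 * (d i ^ 2 * W i j) = s i ^ 2 * (W j i * d j ^ 2) := by
      rw [← a4 i j, ← a4' i j]; ring
    have hy := a1 i j
    have key : s j ^ 2 * (d i ^ 2) ^ 2 * W i j = s i ^ 2 * (d j ^ 2) ^ 2 * W i j := by
      linear_combination (d i ^ 2) * hx + (s i ^ 2 * d j ^ 2) * hy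
    have hne : s j ^ 2 * (d i ^ 2) ^ 2 ≠ s i ^ 2 * (d j ^ 2) ^ 2 := by
      intro hEq
      apply hdist i j hij
      rw [div_eq_div_iff (pow_ne_zero 2 (hs i)) (pow_ne_zero 2 (hs j))]
      linear_combination hEq
    have hfac : (s j ^ 2 * (d i ^ 2) ^ 2 - s i ^ 2 * (d j ^ 2) ^ 2) * W i j = 0 := by
      linear_combination key
    rcases mul_eq_zero.mp hfac with h | h
    · exact absurd (sub_eq_zero.mp h) hne
    · exact h
  -- diagonal characterization
  have hdiag : ∀ i, W i i = 0 ∨ W i i = d i ^ 2 / s i ^ 2 := by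
    intro i
    have h1' := a4 i i
    have hsum : (∑ l, W l i * W l i) = W i i * W i i := by
      rw [Finset.sum_eq_single i]
      · intro l _ hl
        rw [hoff l i hl]; ring
      · simp
    rw [hsum] at h1'
    rcases eq_or_ne (W i i) 0 with h | h
    · exact Or.inl h
    · right
      have hfac : (s i ^ 2 * W i i - d i ^ 2) * W i i = 0 := by linear_combination h1'
      rcases mul_eq_zero.mp hfac with h' | h'
      · rw [eq_div_iff (pow_ne_zero 2 (hs i))]
        linear_combination h'
      · exact absurd h' h
  set I : Finset (Fin m) := Finset.univ.filter (fun i => W i i ≠ 0) with hI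
  have hend : W = Matrix.diagonal (fun i => if i ∈ I then d i ^ 2 / s i ^ 2 else 0) := by
    ext i j
    rcases eq_or_ne i j with rfl | hij
    · simp only [Matrix.diagonal_apply_eq, hI, Finset.mem_filter, Finset.mem_univ, true_and]
      rcases hdiag i with h | h
      · rw [if_neg (fun hc => hc h)]
        exact h
      · have hne : W i i ≠ 0 := by
          rw [h]
          exact div_ne_zero (pow_ne_zero 2 (hd i)) (pow_ne_zero 2 (hs i))
        rw [if_pos hne]
        exact h
    · rw [Matrix.diagonal_apply_ne _ hij]
      exact hoff i j hij
  refine ⟨I, ?_, hend⟩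
  have hrank : W.rank ≤ k := by
    calc W.rank ≤ Q2.rank := Matrix.rank_mul_le_left Q2 Q1
      _ ≤ Fintype.card (Fin k) := Matrix.rank_le_card_width Q2
      _ = k := Fintype.card_fin k
  rw [hend, Matrix.rank_diagonal] at hrank
  have hiff : ∀ i : Fin m, (if i ∈ I then d i ^ 2 / s i ^ 2 else 0) ≠ 0 ↔ i ∈ I := by
    intro i
    by_cases hi : i ∈ I
    · simp [hi, div_ne_zero (pow_ne_zero 2 (hd i)) (pow_ne_zero 2 (hs i))]
    · simp [hi]
  calc I.card
      = (Finset.univ.filter fun i => (if i ∈ I then d i ^ 2 / s i ^ 2 else 0) ≠ 0).card := by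
        congr 1
        ext i
        simp only [Finset.mem_filter, Finset.mem_univ, true_and, hiff i]
    _ = Fintype.card {i // (if i ∈ I then d i ^ 2 / s i ^ 2 else 0) ≠ 0} :=
        (Fintype.card_subtype _).symm
    _ ≤ k := hrank
end

section
/- Let D, S ∈ ℝ^{m×m} be diagonal with D and S invertible, and suppose the diagonal entries of D²S⁻²D² are pairwise distinct and nonzero. Let Q₁ ∈ ℝ^{k×m}, Q₂ ∈ ℝ^{m×k} satisfy Q₂ᵀQ₂Q₁S² = Q₂ᵀD² and Q₂Q₁S²Q₁ᵀ = D²Q₁ᵀ, and set Q = Q₂Q₁. Then the matrix D⁻²S²Qᵀ is symmetric, idempotent, and diagonal with every diagonal entry equal to 0 or 1. -/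
open Matrix

/-!
Write `Q = Q₂Q₁`, `a = s²`, `b = d²`. The critical-point equations give `Q diag(a) Qᵀ = diag(b) Qᵀ`
and `QᵀQ diag(a) = Qᵀ diag(b)`. The left side of the first is symmetric, so `diag(b)` intertwines
`Qᵀ` and `Q`; combined with the second equation and the symmetry of `QᵀQ`, this forces
`(QᵀQ)ᵢⱼ (bᵢ²aⱼ - aᵢbⱼ²) = 0`, and distinctness of the `bᵢ²/aᵢ` makes `Q` diagonal. On the
diagonal the first equation reads `qᵢ aᵢ qᵢ = bᵢ qᵢ`, so `aᵢ qᵢ / bᵢ ∈ {0, 1}`.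
-/

namespace Matrix

variable {n R K : Type*} [Fintype n] [DecidableEq n]

section CommRing

variable [CommRing R] {a b : n → R} {Q : Matrix n n R}

theorem diagonal_mul_transpose_eq_mul_diagonal
    (hA : Q * diagonal a * Qᵀ = diagonal b * Qᵀ) :
    diagonal b * Qᵀ = Q * diagonal b := by
  have h := congrArg transpose hA
  simp only [transpose_mul, transpose_transpose, diagonal_transpose, ← Matrix.mul_assoc] at h
  exact hA.symm.trans h

theorem isDiag_of_critical [IsDomain R]
    (hA : Q * diagonal a * Qᵀ = diagonal b * Qᵀ)
    (hB : Qᵀ * Q * diagonal a = Qᵀ * diagonal b)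
    (hb : ∀ i, b i ≠ 0) (hdist : ∀ i j, i ≠ j → b i ^ 2 * a j ≠ a i * b j ^ 2) :
    Q.IsDiag := by
  intro i j hij
  have hC := diagonal_mul_transpose_eq_mul_diagonal hA
  have hBij : (Qᵀ * Q) i j * a j = Q j i * b j := by
    simpa [mul_diagonal] using congrFun (congrFun hB i) j
  have hBji : (Qᵀ * Q) i j * a i = Q i j * b i := by
    rw [← transpose_apply (Qᵀ * Q), transpose_mul, transpose_transpose]
    simpa [mul_diagonal] using congrFun (congrFun hB j) i
  have hCij : b i * Q j i = Q i j * b j := by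
    simpa [diagonal_mul, mul_diagonal] using congrFun (congrFun hC i) j
  have hgram : (Qᵀ * Q) i j * (b i ^ 2 * a j - a i * b j ^ 2) = 0 := by
    linear_combination b i ^ 2 * hBij - b j ^ 2 * hBji + b i * b j * hCij
  have hgram_zero : (Qᵀ * Q) i j = 0 :=
    (mul_eq_zero.mp hgram).resolve_right (sub_ne_zero.mpr (hdist i j hij))
  have : Q i j * b i = 0 := by rw [← hBji, hgram_zero, zero_mul]
  exact (mul_eq_zero.mp this).resolve_right (hb i)

theorem diag_mul_diagonal_eq_of_critical (hQ : Q.IsDiag)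
    (hA : Q * diagonal a * Qᵀ = diagonal b * Qᵀ) (i : n) :
    Q i i * a i * Q i i = b i * Q i i := by
  rw [← hQ.diagonal_diag, diagonal_transpose, diagonal_mul_diagonal, diagonal_mul_diagonal,
    diagonal_mul_diagonal] at hA
  simpa using congrFun (congrFun hA i) i

end CommRing

theorem div_mul_diag_eq_zero_or_one_of_critical [Field K] {a b : n → K} {Q : Matrix n n K}
    (hQ : Q.IsDiag) (hA : Q * diagonal a * Qᵀ = diagonal b * Qᵀ) (hb : ∀ i, b i ≠ 0) (i : n) :
    a i / b i * Q i i = 0 ∨ a i / b i * Q i i = 1 := by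
  rcases eq_or_ne (Q i i) 0 with h | h
  · exact .inl (by rw [h, mul_zero])
  · have hq : Q i i * a i = b i :=
      mul_right_cancel₀ h (diag_mul_diagonal_eq_of_critical hQ hA i)
    refine .inr ?_
    rw [div_mul_eq_mul_div, div_eq_one_iff_eq (hb i)]
    linear_combination hq

theorem diagonal_mul_self_of_forall_eq_zero_or_one [NonAssocSemiring R] {f : n → R}
    (hf : ∀ i, f i = 0 ∨ f i = 1) :
    diagonal f * diagonal f = diagonal f := by
  rw [diagonal_mul_diagonal]
  congr 1
  funext i
  rcases hf i with h | h <;> simp [h]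

end Matrix

theorem critical_projection_general {m k : ℕ} (d s : Fin m → ℝ)
    (hd : ∀ i, d i ≠ 0) (hs : ∀ i, s i ≠ 0)
    (hdist : ∀ i j : Fin m, i ≠ j → d i ^ 4 / s i ^ 2 ≠ d j ^ 4 / s j ^ 2)
    (Q1 : Matrix (Fin k) (Fin m) ℝ) (Q2 : Matrix (Fin m) (Fin k) ℝ)
    (h1 : Q2ᵀ * Q2 * Q1 * Matrix.diagonal (fun i => s i ^ 2) =
          Q2ᵀ * Matrix.diagonal (fun i => d i ^ 2))
    (h2 : Q2 * Q1 * Matrix.diagonal (fun i => s i ^ 2) * Q1ᵀ =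
          Matrix.diagonal (fun i => d i ^ 2) * Q1ᵀ)
    (M : Matrix (Fin m) (Fin m) ℝ)
    (hM : M = Matrix.diagonal (fun i => s i ^ 2 / d i ^ 2) * (Q2 * Q1)ᵀ) :
    Mᵀ = M ∧ M * M = M ∧ M.IsDiag ∧ ∀ i, M i i = 0 ∨ M i i = 1 := by
  have hA : Q2 * Q1 * diagonal (fun i => s i ^ 2) * (Q2 * Q1)ᵀ =
      diagonal (fun i => d i ^ 2) * (Q2 * Q1)ᵀ := by
    simpa only [transpose_mul, Matrix.mul_assoc] using congrArg (· * Q2ᵀ) h2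
  have hB : (Q2 * Q1)ᵀ * (Q2 * Q1) * diagonal (fun i => s i ^ 2) =
      (Q2 * Q1)ᵀ * diagonal (fun i => d i ^ 2) := by
    simpa only [transpose_mul, Matrix.mul_assoc] using congrArg (Q1ᵀ * ·) h1
  have hb : ∀ i, d i ^ 2 ≠ 0 := fun i => pow_ne_zero 2 (hd i)
  have hQ : (Q2 * Q1).IsDiag := isDiag_of_critical hA hB hb fun i j hij h =>
    hdist i j hij <| by
      rw [div_eq_div_iff (pow_ne_zero 2 (hs i)) (pow_ne_zero 2 (hs j))]
      linear_combination h
  have hMdiag : M = diagonal fun i => s i ^ 2 / d i ^ 2 * (Q2 * Q1) i i := by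
    rw [hM, ← hQ.transpose.diagonal_diag, diagonal_mul_diagonal]
    rfl
  have hval := div_mul_diag_eq_zero_or_one_of_critical hQ hA hb
  subst hMdiag
  exact ⟨diagonal_transpose _, diagonal_mul_self_of_forall_eq_zero_or_one hval,
    isDiag_diagonal _, fun i => by simpa using hval i⟩

/-- For diagonal invertible `D, S` with the diagonal entries `dᵢ⁴/sᵢ²` of
`D²S⁻²D²` pairwise distinct and nonzero, at any critical point of
`L_*(Q₁,Q₂) = tr(Q₂Q₁S²Q₁ᵀQ₂ᵀ − 2Q₂Q₁D²)` the matrix `D⁻²S²Qᵀ` (with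
`Q = Q₂Q₁`) is symmetric, idempotent, and diagonal with 0/1 diagonal entries. -/
theorem critical_projection {m k : ℕ} (d s : Fin m → ℝ)
    (hd : ∀ i, d i ≠ 0) (hs : ∀ i, s i ≠ 0)
    (hnz : ∀ i, d i ^ 4 / s i ^ 2 ≠ 0)
    (hdist : ∀ i j : Fin m, i ≠ j → d i ^ 4 / s i ^ 2 ≠ d j ^ 4 / s j ^ 2)
    (Q1 : Matrix (Fin k) (Fin m) ℝ) (Q2 : Matrix (Fin m) (Fin k) ℝ)
    (h1 : Q2ᵀ * Q2 * Q1 * Matrix.diagonal (fun i => s i ^ 2) =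
          Q2ᵀ * Matrix.diagonal (fun i => d i ^ 2))
    (h2 : Q2 * Q1 * Matrix.diagonal (fun i => s i ^ 2) * Q1ᵀ =
          Matrix.diagonal (fun i => d i ^ 2) * Q1ᵀ)
    (M : Matrix (Fin m) (Fin m) ℝ)
    (hM : M = Matrix.diagonal (fun i => s i ^ 2 / d i ^ 2) * (Q2 * Q1)ᵀ) :
    Mᵀ = M ∧ M * M = M ∧ M.IsDiag ∧ ∀ i, M i i = 0 ∨ M i i = 1 :=
  critical_projection_general d s hd hs hdist Q1 Q2 h1 h2 M hM
end

section
/- Let X ∈ ℝ^{m×n} with XXᵀ = UΛUᵀ, where U ∈ ℝ^{m×m} is orthogonal and Λ is diagonal with pairwise distinct positive diagonal entries. If W₁ ∈ ℝ^{k×m}, W₂ ∈ ℝ^{m×k} form a critical point of the unregularized loss L, i.e. W₂ᵀ(W₂W₁ − I_m)XXᵀ = 0 and (W₂W₁ − I_m)XXᵀW₁ᵀ = 0, then there exists an index set 𝓘 ⊆ {1,…,m} with |𝓘| ≤ k such that W₂W₁ = U P_𝓘 Uᵀ, where P_𝓘 is the 0/1 diagonal matrix with (P_𝓘)ᵢᵢ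 = 1 exactly for i ∈ 𝓘. In particular, W₂W₁ is the orthogonal projection onto the span of the eigenvectors of XXᵀ indexed by 𝓘. -/
/-!
With `S = XXᵀ` invertible, the first critical-point equation gives `PᵀP = Pᵀ` for `P = W₂W₁`,
so `P` is a symmetric idempotent. The second one then gives `PSP = SP`, and transposing shows
that `P` commutes with `S`. Hence `UᵀPU` is an idempotent commuting with the diagonal matrix
`Λ` of pairwise distinct eigenvalues, so it is diagonal with entries in `{0, 1}`. The number of
ones is its rank, which equals `rank P ≤ rank W₂ ≤ k`.
-/

open Matrix

namespace Matrix

section Square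

variable {ι R : Type*} [Fintype ι] [CommRing R]

theorem isSymm_of_transpose_mul_self_eq_transpose {P : Matrix ι ι R} (h : Pᵀ * P = Pᵀ) :
    P.IsSymm := by
  have hsymm : (Pᵀ * P).IsSymm := isSymm_transpose_mul_self P
  rw [h] at hsymm
  simpa [IsSymm] using hsymm.symm

theorem isIdempotentElem_of_transpose_mul_self_eq_transpose {P : Matrix ι ι R}
    (h : Pᵀ * P = Pᵀ) : IsIdempotentElem P := by
  have hP : Pᵀ = P := isSymm_of_transpose_mul_self_eq_transpose h
  rwa [hP] at h

theorem commute_of_mul_mul_eq_mul {P S : Matrix ι ι R} (hP : P.IsSymm) (hS : S.IsSymm)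
    (h : P * S * P = S * P) : Commute P S := by
  have ht : P * S * P = P * S := by
    simpa [transpose_mul, hP.eq, hS.eq, mul_assoc] using congrArg transpose h
  exact ht.symm.trans h

variable [DecidableEq ι] {U : Matrix ι ι R}

theorem _root_.Commute.transpose_mul_mul (hU : U * Uᵀ = 1) {P Q : Matrix ι ι R}
    (h : Commute P Q) : Commute (Uᵀ * P * U) (Uᵀ * Q * U) := by
  have hcancel (M : Matrix ι ι R) : U * (Uᵀ * M) = M := by rw [← mul_assoc, hU, one_mul]
  simp only [Commute, SemiconjBy, mul_assoc, hcancel]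
  rw [← mul_assoc P, h.eq, mul_assoc]

theorem _root_.IsIdempotentElem.transpose_mul_mul (hU : U * Uᵀ = 1) {P : Matrix ι ι R}
    (h : IsIdempotentElem P) : IsIdempotentElem (Uᵀ * P * U) := by
  have hcancel (M : Matrix ι ι R) : U * (Uᵀ * M) = M := by rw [← mul_assoc, hU, one_mul]
  simp only [IsIdempotentElem, mul_assoc, hcancel]
  rw [← mul_assoc P, h.eq]

theorem transpose_mul_mul_eq_iff (hU : Uᵀ * U = 1) {P D : Matrix ι ι R} :
    Uᵀ * P * U = D ↔ P = U * D * Uᵀ := by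
  have hU' : U * Uᵀ = 1 := mul_eq_one_comm.mp hU
  constructor <;> rintro rfl
  · simp only [← mul_assoc, hU', one_mul]
    rw [mul_assoc, hU', mul_one]
  · simp only [← mul_assoc, hU, one_mul]
    rw [mul_assoc, hU, mul_one]

theorem isDiag_of_commute_diagonal [NoZeroDivisors R] {A : Matrix ι ι R} {d : ι → R}
    (hd : Function.Injective d) (h : Commute A (diagonal d)) : A.IsDiag := by
  intro i j hij
  have hij' : A i j * d j = d i * A i j := by
    simpa [mul_diagonal, diagonal_mul] using congrFun₂ h.eq i j
  have : (d j - d i) * A i j = 0 := by linear_combination hij'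
  exact (mul_eq_zero.mp this).resolve_left (sub_ne_zero.mpr (hd.ne hij).symm)

theorem IsDiag.exists_eq_diagonal_indicator [NoZeroDivisors R] {A : Matrix ι ι R}
    (hA : A.IsDiag) (hA' : IsIdempotentElem A) :
    ∃ I : Finset ι, A = diagonal fun i => if i ∈ I then 1 else 0 := by
  classical
  rw [← hA.diagonal_diag] at hA' ⊢
  have hentry (i : ι) : IsIdempotentElem (A i i) := by
    simpa [IsIdempotentElem, diagonal_mul_diagonal] using congrFun₂ hA' i i
  refine ⟨Finset.univ.filter fun i => A i i = 1, ?_⟩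
  congr 1
  ext i
  rcases IsIdempotentElem.iff_eq_zero_or_one.mp (hentry i) with h | h <;> simp [h]

theorem rank_diagonal_indicator {K : Type*} [Field K] (I : Finset ι) :
    (diagonal fun i => if i ∈ I then (1 : K) else 0).rank = I.card := by
  classical
  rw [rank_diagonal, Fintype.card_subtype]
  congr 1
  ext i
  simp

end Square

section CriticalPoint

variable {ι κ R : Type*} [Fintype ι] [Fintype κ] [DecidableEq ι] [CommRing R]

/-- The vanishing-gradient equations of `‖X - W₂W₁X‖_F²`, which depend on `X` only through
`S = XXᵀ`. -/
def IsAutoencoderCriticalPoint (S : Matrix ι ι R) (W1 : Matrix κ ι R) (W2 : Matrix ι κ R) :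
    Prop :=
  W2ᵀ * (W2 * W1 - 1) * S = 0 ∧ (W2 * W1 - 1) * S * W1ᵀ = 0

namespace IsAutoencoderCriticalPoint

variable {S : Matrix ι ι R} {W1 : Matrix κ ι R} {W2 : Matrix ι κ R}

theorem transpose_mul_self_eq_transpose (h : IsAutoencoderCriticalPoint S W1 W2)
    (hS : IsUnit S) : (W2 * W1)ᵀ * (W2 * W1) = (W2 * W1)ᵀ := by
  have h' : (W2 * W1)ᵀ * (W2 * W1 - 1) * S = 0 := by
    have h1 := h.1
    simp only [transpose_mul, Matrix.mul_assoc] at h1 ⊢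
    rw [h1, Matrix.mul_zero]
  rwa [hS.mul_left_eq_zero, Matrix.mul_sub, Matrix.mul_one, sub_eq_zero] at h'

theorem isSymm (h : IsAutoencoderCriticalPoint S W1 W2) (hS : IsUnit S) : (W2 * W1).IsSymm :=
  isSymm_of_transpose_mul_self_eq_transpose (h.transpose_mul_self_eq_transpose hS)

theorem isIdempotentElem (h : IsAutoencoderCriticalPoint S W1 W2) (hS : IsUnit S) :
    IsIdempotentElem (W2 * W1) :=
  isIdempotentElem_of_transpose_mul_self_eq_transpose (h.transpose_mul_self_eq_transpose hS)

theorem commute (h : IsAutoencoderCriticalPoint S W1 W2) (hS : IsUnit S) (hS' : S.IsSymm) :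
    Commute (W2 * W1) S := by
  have hP := h.isSymm hS
  have h' : (W2 * W1 - 1) * S * (W2 * W1)ᵀ = 0 := by
    rw [transpose_mul, ← Matrix.mul_assoc, h.2, Matrix.zero_mul]
  rw [hP.eq, Matrix.sub_mul, Matrix.sub_mul, Matrix.one_mul, sub_eq_zero] at h'
  exact commute_of_mul_mul_eq_mul hP hS' h'

end IsAutoencoderCriticalPoint

end CriticalPoint

end Matrix

/-- At a critical point of the unregularized LAE loss, `W₂W₁` is the orthogonal
projection `U P_𝓘 Uᵀ` onto the span of at most `k` eigenvectors of `XXᵀ`. -/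
theorem unregularized_critical_points {m n k : ℕ}
    (X : Matrix (Fin m) (Fin n) ℝ)
    (U : Matrix (Fin m) (Fin m) ℝ) (l : Fin m → ℝ)
    (hU : Uᵀ * U = 1)
    (hXXt : X * Xᵀ = U * Matrix.diagonal l * Uᵀ)
    (hpos : ∀ i, 0 < l i)
    (hdist : ∀ i j : Fin m, i ≠ j → l i ≠ l j)
    (W1 : Matrix (Fin k) (Fin m) ℝ) (W2 : Matrix (Fin m) (Fin k) ℝ)
    (h1 : W2ᵀ * (W2 * W1 - 1) * (X * Xᵀ) = 0)
    (h2 : (W2 * W1 - 1) * (X * Xᵀ) * W1ᵀ = 0) :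
    ∃ I : Finset (Fin m), I.card ≤ k ∧
      W2 * W1 = U * Matrix.diagonal (fun i => if i ∈ I then (1 : ℝ) else 0) * Uᵀ := by
  have hcrit : IsAutoencoderCriticalPoint (X * Xᵀ) W1 W2 := ⟨h1, h2⟩
  have hUUt : U * Uᵀ = 1 := mul_eq_one_comm.mp hU
  have hXXt_unit : IsUnit (X * Xᵀ) := by
    have hl : IsUnit (diagonal l) := isUnit_diagonal.mpr (Pi.isUnit_iff.mpr (hpos · |>.ne'.isUnit))
    rw [hXXt, isUnit_iff_isUnit_det, det_mul, det_mul]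
    exact ((isUnit_det_of_left_inverse hU).mul (isUnit_iff_isUnit_det _ |>.mp hl)).mul
      (isUnit_det_of_left_inverse hUUt)
  have hXXt_diag : Uᵀ * (X * Xᵀ) * U = diagonal l := (transpose_mul_mul_eq_iff hU).mpr hXXt
  have hcomm := hcrit.commute hXXt_unit (by simp [IsSymm, transpose_mul])
  have hdiag : (Uᵀ * (W2 * W1) * U).IsDiag :=
    isDiag_of_commute_diagonal (fun i j hij => by_contra fun hne => hdist i j hne hij)
      (hXXt_diag ▸ hcomm.transpose_mul_mul hUUt)
  obtain ⟨I, hI⟩ :=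
    hdiag.exists_eq_diagonal_indicator ((hcrit.isIdempotentElem hXXt_unit).transpose_mul_mul hUUt)
  refine ⟨I, ?_, ?_⟩
  · calc I.card = (Uᵀ * (W2 * W1) * U).rank := by rw [hI, rank_diagonal_indicator]
      _ = (W2 * W1).rank := by
        rw [rank_mul_eq_left_of_isUnit_det _ _ (isUnit_det_of_left_inverse hU),
          rank_mul_eq_right_of_isUnit_det _ _ (isUnit_det_of_left_inverse hUUt)]
      _ ≤ W2.rank := rank_mul_le_left _ _
      _ ≤ k := rank_le_width W2
  · exact (transpose_mul_mul_eq_iff hU).mp hI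
end

section
/- Let X ∈ ℝ^{m×n} and let U_𝓘 ∈ ℝ^{m×ℓ} (ℓ ≤ k) have orthonormal columns that are eigenvectors of XXᵀ, i.e. U_𝓘ᵀU_𝓘 = I_ℓ and XXᵀU_𝓘 = U_𝓘Λ_𝓘 for some diagonal Λ_𝓘 ∈ ℝ^{ℓ×ℓ}. Let G ∈ ℝ^{k×ℓ} have linearly independent columns and set W₁ = G U_𝓘ᵀ and W₂ = U_𝓘 (GᵀG)⁻¹Gᵀ. Then (W₁, W₂) is a critical point of the unregularized loss L: it satisfies W₂ᵀ(W₂W₁ − I_m)XXᵀ = 0 and (W₂W₁ − I_m)XXᵀW₁ᵀ = 0. -/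
open Matrix

lemma gram_isUnit {k l : ℕ} (G : Matrix (Fin k) (Fin l) ℝ)
    (hG : LinearIndependent ℝ (fun j : Fin l => Gᵀ j)) :
    IsUnit (Gᵀ * G) := by
  rw [← Matrix.mulVec_injective_iff_isUnit]
  intro x y hxy
  have hinj : Function.Injective (Gᵀ.vecMul) :=
    Matrix.vecMul_injective_iff.mpr hG
  have hGx : ∀ z : Fin l → ℝ, (Gᵀ * G) *ᵥ z = 0 → G *ᵥ z = 0 := by
    intro z hz
    have h1 : z ⬝ᵥ ((Gᵀ * G) *ᵥ z) = (G *ᵥ z) ⬝ᵥ (G *ᵥ z) := by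
      rw [← Matrix.mulVec_mulVec, Matrix.dotProduct_mulVec, Matrix.vecMul_transpose]
    rw [hz, dotProduct_zero] at h1
    exact dotProduct_self_eq_zero.mp h1.symm
  -- reduce to kernel
  have hker : (Gᵀ * G) *ᵥ (x - y) = 0 := by
    rw [Matrix.mulVec_sub, hxy, sub_self]
  have hGz := hGx _ hker
  have : G *ᵥ (x - y) = (x - y) ᵥ* Gᵀ := (Matrix.vecMul_transpose G (x - y)).symm
  have hz : (x - y) ᵥ* Gᵀ = 0 ᵥ* Gᵀ := by
    rw [← this, hGz, Matrix.zero_vecMul]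
  have := hinj hz
  exact sub_eq_zero.mp this

/-- For `U_𝓘` with orthonormal eigenvector columns of `XXᵀ` and `G` with
linearly independent columns, the pair `W₁ = G U_𝓘ᵀ`, `W₂ = U_𝓘 (GᵀG)⁻¹ Gᵀ`
is a critical point of the unregularized LAE loss. -/
theorem unregularized_critical_construction {m n k l : ℕ} (hlk : l ≤ k)
    (X : Matrix (Fin m) (Fin n) ℝ)
    (UI : Matrix (Fin m) (Fin l) ℝ) (lamI : Fin l → ℝ)
    (hUI : UIᵀ * UI = 1)
    (hEig : X * Xᵀ * UI = UI * Matrix.diagonal lamI)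
    (G : Matrix (Fin k) (Fin l) ℝ)
    (hG : LinearIndependent ℝ (fun j : Fin l => Gᵀ j))
    (W1 : Matrix (Fin k) (Fin m) ℝ) (W2 : Matrix (Fin m) (Fin k) ℝ)
    (hW1 : W1 = G * UIᵀ)
    (hW2 : W2 = UI * (Gᵀ * G)⁻¹ * Gᵀ) :
    W2ᵀ * (W2 * W1 - 1) * (X * Xᵀ) = 0 ∧
      (W2 * W1 - 1) * (X * Xᵀ) * W1ᵀ = 0 := by
  have hUnit := gram_isUnit G hG
  have hinv : (Gᵀ * G)⁻¹ * (Gᵀ * G) = 1 :=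
    Matrix.nonsing_inv_mul _ ((Matrix.isUnit_iff_isUnit_det _).mp hUnit)
  have hWW : W2 * W1 = UI * UIᵀ := by
    rw [hW1, hW2]
    calc UI * (Gᵀ * G)⁻¹ * Gᵀ * (G * UIᵀ)
        = UI * ((Gᵀ * G)⁻¹ * (Gᵀ * G)) * UIᵀ := by simp only [Matrix.mul_assoc]
      _ = UI * UIᵀ := by rw [hinv, Matrix.mul_one]
  have hUIU : UI * UIᵀ * UI = UI := by
    rw [Matrix.mul_assoc, hUI, Matrix.mul_one]
  constructor
  · have key : W2ᵀ * (W2 * W1 - 1) = 0 := by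
      rw [hWW, hW2]
      have : (UI * (Gᵀ * G)⁻¹ * Gᵀ)ᵀ = G * ((Gᵀ * G)⁻¹)ᵀ * UIᵀ := by
        simp [Matrix.transpose_mul, Matrix.mul_assoc]
      rw [this]
      have h2 : UIᵀ * (UI * UIᵀ - 1) = 0 := by
        rw [Matrix.mul_sub, Matrix.mul_one, ← Matrix.mul_assoc, hUI, Matrix.one_mul, sub_self]
      calc G * ((Gᵀ * G)⁻¹)ᵀ * UIᵀ * (UI * UIᵀ - 1)
          = G * ((Gᵀ * G)⁻¹)ᵀ * (UIᵀ * (UI * UIᵀ - 1)) := by rw [Matrix.mul_assoc]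
        _ = 0 := by rw [h2, Matrix.mul_zero]
    rw [key, Matrix.zero_mul]
  · rw [hWW, hW1, Matrix.transpose_mul, Matrix.transpose_transpose]
    calc (UI * UIᵀ - 1) * (X * Xᵀ) * (UI * Gᵀ)
        = (UI * UIᵀ - 1) * (X * Xᵀ * UI) * Gᵀ := by
          simp only [Matrix.mul_assoc]
      _ = (UI * UIᵀ - 1) * (UI * Matrix.diagonal lamI) * Gᵀ := by rw [hEig]
      _ = ((UI * UIᵀ - 1) * UI) * Matrix.diagonal lamI * Gᵀ := by simp only [Matrix.mul_assoc]
      _ = 0 := by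
          rw [Matrix.sub_mul, Matrix.one_mul, hUIU, sub_self, Matrix.zero_mul, Matrix.zero_mul]
end

section
/- Let λ > 0 and X ∈ ℝ^{m×n} with XXᵀ = UΛUᵀ, where U ∈ ℝ^{m×m} is orthogonal and Λ is diagonal with pairwise distinct positive diagonal entries λ₁,…,λ_m. If W₁ ∈ ℝ^{k×m}, W₂ ∈ ℝ^{m×k} form a critical point of the product loss L_π, i.e. W₂ᵀ((W₂W₁ − I_m)XXᵀ + λW₂W₁) = 0 and ((W₂W₁ − I_m)XXᵀ + λW₂W₁)W₁ᵀ = 0, then there exists an index set 𝓘 ⊆ {1,…,m} with |𝓘| ≤ k such that W₂W₁ = U D Uᵀ, where D is the diagonal matrix with Dᵢᵢ = λᵢ/(λᵢ + λ) for i ∈ 𝓘 and Dᵢᵢ = 0 otherwise. -/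
open Matrix

/-- At a critical point of the product loss `L_π`, `W₂W₁ = U D Uᵀ` where `D`
is diagonal with entries `λᵢ/(λᵢ + λ)` on an index set of size at most `k`
and `0` elsewhere. -/
theorem product_critical_points {m n k : ℕ} (lam : ℝ) (hlam : 0 < lam)
    (X : Matrix (Fin m) (Fin n) ℝ)
    (U : Matrix (Fin m) (Fin m) ℝ) (l : Fin m → ℝ)
    (hU : Uᵀ * U = 1)
    (hXXt : X * Xᵀ = U * Matrix.diagonal l * Uᵀ)
    (hpos : ∀ i, 0 < l i)
    (hdist : ∀ i j : Fin m, i ≠ j → l i ≠ l j)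
    (W1 : Matrix (Fin k) (Fin m) ℝ) (W2 : Matrix (Fin m) (Fin k) ℝ)
    (h1 : W2ᵀ * ((W2 * W1 - 1) * (X * Xᵀ) + lam • (W2 * W1)) = 0)
    (h2 : ((W2 * W1 - 1) * (X * Xᵀ) + lam • (W2 * W1)) * W1ᵀ = 0) :
    ∃ I : Finset (Fin m), I.card ≤ k ∧
      W2 * W1 =
        U * Matrix.diagonal (fun i => if i ∈ I then l i / (l i + lam) else 0) * Uᵀ := by
  classical
  have hUU : U * Uᵀ = 1 := mul_eq_one_comm.mp hU
  set Q : Matrix (Fin m) (Fin m) ℝ := Uᵀ * (W2 * W1) * U with hQdef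
  have hQ : W2 * W1 = U * Q * Uᵀ := by
    rw [hQdef]
    calc W2 * W1 = (U * Uᵀ) * (W2 * W1) * (U * Uᵀ) := by
          rw [hUU, Matrix.one_mul, Matrix.mul_one]
      _ = U * (Uᵀ * (W2 * W1) * U) * Uᵀ := by simp only [Matrix.mul_assoc]
  set L : Matrix (Fin m) (Fin m) ℝ := Matrix.diagonal l with hLdef
  have hLT : Lᵀ = L := by rw [hLdef, Matrix.diagonal_transpose]
  set F : Matrix (Fin m) (Fin m) ℝ := Q * L + lam • Q - L with hFdef
  have habs : ∀ A : Matrix (Fin m) (Fin m) ℝ, Uᵀ * (U * A) = A := by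
    intro A
    rw [← Matrix.mul_assoc, hU, Matrix.one_mul]
  have move : ∀ A B : Matrix (Fin m) (Fin m) ℝ,
      (U * A * Uᵀ) * (U * B * Uᵀ) = U * (A * B) * Uᵀ := by
    intro A B
    simp only [Matrix.mul_assoc, habs]
  have sandwich : ∀ A : Matrix (Fin m) (Fin m) ℝ, Uᵀ * (U * A * Uᵀ) * U = A := by
    intro A
    calc Uᵀ * (U * A * Uᵀ) * U = (Uᵀ * U) * A * (Uᵀ * U) := by simp only [Matrix.mul_assoc]
      _ = A := by rw [hU, Matrix.one_mul, Matrix.mul_one]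
  have hE : (W2 * W1 - 1) * (X * Xᵀ) + lam • (W2 * W1) = U * F * Uᵀ := by
    rw [hXXt, hQ, hFdef]
    rw [Matrix.sub_mul, Matrix.one_mul, move Q L]
    rw [Matrix.mul_sub, Matrix.mul_add, Matrix.sub_mul, Matrix.add_mul]
    rw [Matrix.mul_smul, Matrix.smul_mul]
    abel
  have hQT : (W2 * W1)ᵀ = U * Qᵀ * Uᵀ := by
    rw [hQ]
    simp [Matrix.transpose_mul, Matrix.mul_assoc]
  have hEP : U * (F * Qᵀ) * Uᵀ = 0 := by
    have h2' : ((W2 * W1 - 1) * (X * Xᵀ) + lam • (W2 * W1)) * (W2 * W1)ᵀ = 0 := by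
      rw [Matrix.transpose_mul, ← Matrix.mul_assoc, h2, Matrix.zero_mul]
    rw [hE, hQT] at h2'
    rw [move F Qᵀ] at h2'
    exact h2'
  have hPE : U * (Qᵀ * F) * Uᵀ = 0 := by
    have h1' : (W2 * W1)ᵀ * ((W2 * W1 - 1) * (X * Xᵀ) + lam • (W2 * W1)) = 0 := by
      rw [Matrix.transpose_mul, Matrix.mul_assoc, h1, Matrix.mul_zero]
    rw [hE, hQT] at h1'
    rw [move Qᵀ F] at h1'
    exact h1'
  have hFQ : F * Qᵀ = 0 := by
    have := congrArg (fun B => Uᵀ * B * U) hEP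
    simpa [sandwich (F * Qᵀ)] using this
  have hQF : Qᵀ * F = 0 := by
    have := congrArg (fun B => Uᵀ * B * U) hPE
    simpa [sandwich (Qᵀ * F)] using this
  have hQF' : Qᵀ * Q * L + lam • (Qᵀ * Q) - Qᵀ * L = 0 := by
    rw [← hQF, hFdef]
    rw [Matrix.mul_sub, Matrix.mul_add, Matrix.mul_smul, Matrix.mul_assoc]
  have hFQ' : Q * L * Qᵀ + lam • (Q * Qᵀ) - L * Qᵀ = 0 := by
    rw [← hFQ, hFdef]
    rw [Matrix.sub_mul, Matrix.add_mul, Matrix.smul_mul]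
  have hA : Q * (L * Qᵀ) + lam • (Q * Qᵀ) = L * Qᵀ := by
    rw [← Matrix.mul_assoc]; exact sub_eq_zero.mp hFQ'
  have hB : Q * (L * Qᵀ) + lam • (Q * Qᵀ) = Q * L := by
    have ht := congrArg Matrix.transpose hFQ'
    simp only [Matrix.transpose_sub, Matrix.transpose_add, Matrix.transpose_smul,
      Matrix.transpose_mul, Matrix.transpose_transpose, hLT, Matrix.transpose_zero] at ht
    exact sub_eq_zero.mp ht
  have hsymM : Q * L = L * Qᵀ := hB.symm.trans hA
  -- entrywise consequences
  have hsym : ∀ i j, Q i j * l j = l i * Q j i := by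
    intro i j
    have := congrFun (congrFun hsymM i) j
    simpa [hLdef, Matrix.mul_diagonal, Matrix.diagonal_mul, Matrix.transpose_apply] using this
  have hkey : ∀ i j, (Qᵀ * Q) i j * (l j + lam) = Q j i * l j := by
    intro i j
    have := congrFun (congrFun hQF' i) j
    simp only [Matrix.sub_apply, Matrix.add_apply, Matrix.smul_apply, hLdef,
      Matrix.mul_diagonal, Matrix.transpose_apply, Matrix.zero_apply, smul_eq_mul] at this
    linarith [this]
  have hSsym : ∀ i j, (Qᵀ * Q) i j = (Qᵀ * Q) j i := by
    intro i j
    simp only [Matrix.mul_apply, Matrix.transpose_apply]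
    exact Finset.sum_congr rfl fun t _ => mul_comm _ _
  -- off-diagonal entries vanish
  have hoff : ∀ i j, i ≠ j → Q i j = 0 := by
    intro i j hij
    have e1 := hkey i j
    have e2 := hkey j i
    rw [← hSsym i j] at e2
    have es := hsym i j
    have hli := hpos i
    have hlj := hpos j
    have hne : l i - l j ≠ 0 := sub_ne_zero.mpr (hdist i j hij)
    set s := (Qᵀ * Q) i j with hs
    have h5 : s * ((l j + lam) * (l i) ^ 2 - (l i + lam) * (l j) ^ 2) = 0 := by
      linear_combination (l i) ^ 2 * e1 - (l j) ^ 2 * e2 - (l i) * (l j) * es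
    have hfac : (l j + lam) * (l i) ^ 2 - (l i + lam) * (l j) ^ 2 ≠ 0 := by
      have h6 : (l j + lam) * (l i) ^ 2 - (l i + lam) * (l j) ^ 2 =
          (l i - l j) * (l i * l j + lam * (l i + l j)) := by ring
      rw [h6]
      refine mul_ne_zero hne (ne_of_gt ?_)
      nlinarith [hpos i, hpos j, hlam]
    have hs0 : s = 0 := by
      rcases mul_eq_zero.mp h5 with h | h
      · exact h
      · exact absurd h hfac
    -- e2 : s * (l i + lam) = Q i j * l i
    rw [hs0] at e2
    have : Q i j * l i = 0 := by linarith
    exact (mul_eq_zero.mp this).resolve_right (ne_of_gt hli)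
  -- diagonal entries
  have hdiag : ∀ i, Q i i = 0 ∨ Q i i = l i / (l i + lam) := by
    intro i
    have e := hkey i i
    have hS : (Qᵀ * Q) i i = Q i i * Q i i := by
      rw [Matrix.mul_apply]
      rw [Finset.sum_eq_single i]
      · simp [Matrix.transpose_apply]
      · intro t _ ht
        rw [Matrix.transpose_apply, hoff t i ht, zero_mul]
      · simp
    rw [hS] at e
    by_cases hq : Q i i = 0
    · exact Or.inl hq
    · right
      have hden : l i + lam ≠ 0 := ne_of_gt (by linarith [hpos i])
      field_simp
      have := mul_left_cancel₀ hq (by linarith [e] : Q i i * (Q i i * (l i + lam)) = Q i i * l i)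
      linarith [this]
  set I : Finset (Fin m) := Finset.univ.filter (fun i => Q i i ≠ 0) with hIdef
  set d : Fin m → ℝ := fun i => if i ∈ I then l i / (l i + lam) else 0 with hddef
  have hQd : Q = Matrix.diagonal d := by
    ext i j
    by_cases hij : i = j
    · subst hij
      have hmem : i ∈ I ↔ Q i i ≠ 0 := by simp [hIdef]
      rw [Matrix.diagonal_apply_eq, hddef]
      rcases hdiag i with h | h
      · simp [h, hmem]
      · have hne : Q i i ≠ 0 := by
          rw [h]
          have := hpos i
          positivity
        simp [hmem.mpr hne, h]
    · rw [Matrix.diagonal_apply_ne _ hij, hoff i j hij]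
  have hdne : ∀ i, d i ≠ 0 ↔ Q i i ≠ 0 := by
    intro i
    constructor
    · intro h
      by_contra hq
      apply h
      have : i ∉ I := by simp [hIdef, hq]
      simp [hddef, this]
    · intro h
      have hi : i ∈ I := by simp [hIdef, h]
      simp only [hddef, if_pos hi]
      exact ne_of_gt (div_pos (hpos i) (by linarith [hpos i]))
  have hcard : I.card ≤ k := by
    have hrk : (Matrix.diagonal d).rank = Fintype.card {i // d i ≠ 0} :=
      Matrix.rank_diagonal d
    have hc1 : Fintype.card {i // d i ≠ 0} = Fintype.card {i // Q i i ≠ 0} :=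
      Fintype.card_congr (Equiv.subtypeEquivRight hdne)
    have hc2 : Fintype.card {i // Q i i ≠ 0} = I.card := Fintype.card_subtype _
    have hrank_le : Q.rank ≤ k := by
      calc Q.rank = (Uᵀ * (W2 * W1) * U).rank := by rw [hQdef]
        _ ≤ (Uᵀ * (W2 * W1)).rank := Matrix.rank_mul_le_left _ _
        _ ≤ (W2 * W1).rank := Matrix.rank_mul_le_right _ _
        _ ≤ W1.rank := Matrix.rank_mul_le_right _ _
        _ ≤ k := by simpa using Matrix.rank_le_height W1
    calc I.card = Fintype.card {i // Q i i ≠ 0} := hc2.symm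
      _ = Fintype.card {i // d i ≠ 0} := hc1.symm
      _ = (Matrix.diagonal d).rank := hrk.symm
      _ = Q.rank := by rw [hQd]
      _ ≤ k := hrank_le
  refine ⟨I, hcard, ?_⟩
  rw [hQ, hQd]
end

section
/- Let λ > 0 and X ∈ ℝ^{m×n} with XXᵀ = UΛUᵀ, where U ∈ ℝ^{m×m} is orthogonal and Λ is diagonal with pairwise distinct positive diagonal entries λ₁,…,λ_m, each distinct from λ. If W₁ ∈ ℝ^{k×m}, W₂ ∈ ℝ^{m×k} form a critical point of the sum loss L_σ, i.e. W₂ᵀ(W₂W₁ − I_m)XXᵀ + λW₁ = 0 and (W₂W₁ − I_m)XXᵀW₁ᵀ + λW₂ = 0, then W₁ = W₂ᵀ and there exists an index set 𝓘 ⊆ {i : λᵢ > λ} with |𝓘| ≤ k such that W₂W₁ = U D Uᵀ, where D is the diagonal matrix with Dᵢᵢ = 1 − λ/λᵢ for i ∈ 𝓘 and Dᵢᵢ = 0 otherwise. -/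
/-!
Write `A = XXᵀ` and `Z = (I - W₂W₁)A`; the gradient equations say `λW₁ = W₂ᵀZ` and
`λW₂ = ZW₁ᵀ`. Comparing the two resulting expressions for `λW₂W₂ᵀ` shows that `Z` is symmetric,
hence `Z = λW₂W₂ᵀ + ZᵀA⁻¹Z` is positive semidefinite and `Z + λ` is invertible; since
`(W₁ - W₂ᵀ)(Z + λ) = 0`, this gives `W₁ = W₂ᵀ`. Then `M = W₂W₂ᵀ` is positive semidefinite,
commutes with `A` and satisfies `(I - M)AM = λM`. In the eigenbasis of `A`, commuting with a
diagonal matrix with distinct entries forces `M` to be diagonal, and each diagonal entry `μ ≠ 0`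
satisfies `(1 - μ)λᵢ = λ`, i.e. `μ = 1 - λ/λᵢ`, which is positive only when `λᵢ > λ`. The number
of nonzero entries is `rank M ≤ k`.
-/

open Matrix

lemma Matrix.isDiag_of_commute_diagonal_s13 {R n : Type*} [CommRing R] [NoZeroDivisors R]
    [Fintype n] [DecidableEq n] {D : Matrix n n R} {l : n → R} (hl : Function.Injective l)
    (h : Commute D (diagonal l)) : D.IsDiag := by
  intro i j hij
  have hij' : D i j * l j = l i * D i j := by
    simpa only [mul_diagonal, diagonal_mul] using congrFun (congrFun h.eq i) j
  have : D i j * (l j - l i) = 0 := by linear_combination hij'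
  exact (mul_eq_zero.1 this).resolve_right (sub_ne_zero.2 (hl.ne hij.symm))

namespace SumLoss

variable {m k : Type*} [Fintype m] [Fintype k] [DecidableEq m]
  {A : Matrix m m ℝ} {W1 : Matrix k m ℝ} {W2 : Matrix m k ℝ} {lam : ℝ}

def residual (A : Matrix m m ℝ) (W1 : Matrix k m ℝ) (W2 : Matrix m k ℝ) : Matrix m m ℝ :=
  (1 - W2 * W1) * A

lemma smul_encoder_eq (h1 : W2ᵀ * (W2 * W1 - 1) * A + lam • W1 = 0) :
    lam • W1 = W2ᵀ * residual A W1 W2 := by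
  rw [residual, ← neg_sub, Matrix.neg_mul, Matrix.mul_neg, ← Matrix.mul_assoc]
  exact eq_neg_of_add_eq_zero_right h1

lemma smul_decoder_eq (h2 : (W2 * W1 - 1) * A * W1ᵀ + lam • W2 = 0) :
    lam • W2 = residual A W1 W2 * W1ᵀ := by
  rw [residual, ← neg_sub, Matrix.neg_mul, Matrix.neg_mul]
  exact eq_neg_of_add_eq_zero_right h2

lemma smul_mul_transpose_eq (e2 : lam • W2 = residual A W1 W2 * W1ᵀ) :
    lam • (W2 * W2ᵀ) = W2 * W1 * (residual A W1 W2)ᵀ := by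
  rw [← Matrix.mul_smul, ← transpose_smul, e2, transpose_mul, transpose_transpose,
    Matrix.mul_assoc]

lemma mul_mul_eq_mul_transpose (hA : A.IsSymm) (e2 : lam • W2 = residual A W1 W2 * W1ᵀ) :
    W2 * W1 * A = A * (W2 * W1)ᵀ := by
  have h : W2 * W1 * (residual A W1 W2)ᵀ = residual A W1 W2 * (W2 * W1)ᵀ := by
    rw [← smul_mul_transpose_eq e2, ← Matrix.smul_mul, e2, transpose_mul, Matrix.mul_assoc]
  simpa only [residual, transpose_mul, transpose_sub, transpose_one, hA.eq, Matrix.mul_sub,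
    Matrix.sub_mul, Matrix.mul_one, Matrix.one_mul, Matrix.mul_assoc, sub_left_inj] using h

lemma residual_isSymm (hA : A.IsSymm) (e2 : lam • W2 = residual A W1 W2 * W1ᵀ) :
    (residual A W1 W2).IsSymm := by
  rw [IsSymm, residual, transpose_mul, hA.eq, transpose_sub, transpose_one, Matrix.mul_sub,
    Matrix.mul_one, ← mul_mul_eq_mul_transpose hA e2, Matrix.sub_mul, Matrix.one_mul]

lemma posSemidef_residual (hA : A.PosDef) (hlam : 0 ≤ lam)
    (e2 : lam • W2 = residual A W1 W2 * W1ᵀ) : (residual A W1 W2).PosSemidef := by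
  have hAs : A.IsSymm := isHermitian_iff_isSymm.1 hA.isHermitian
  set Z := residual A W1 W2 with hZ
  have hZs : Zᵀ = Z := residual_isSymm hAs e2
  have hZA : Z * A⁻¹ = 1 - W2 * W1 := by
    rw [hZ, residual, mul_nonsing_inv_cancel_right _ _ ((isUnit_iff_isUnit_det A).1 hA.isUnit)]
  have hsplit : Z = lam • (W2 * W2ᵀ) + Zᵀ * A⁻¹ * Z := by
    calc Z = W2 * W1 * Zᵀ + Z * A⁻¹ * Z := by
          rw [hZs, ← Matrix.add_mul, hZA, add_sub_cancel, Matrix.one_mul]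
      _ = _ := by rw [smul_mul_transpose_eq e2, hZs]
  rw [hsplit]
  exact ((posSemidef_self_mul_conjTranspose W2).smul hlam).add
    (by simpa using hA.inv.posSemidef.conjTranspose_mul_mul_same Z)

lemma encoder_eq_transpose (hA : A.PosDef) (hlam : 0 < lam)
    (e1 : lam • W1 = W2ᵀ * residual A W1 W2) (e2 : lam • W2 = residual A W1 W2 * W1ᵀ) :
    W1 = W2ᵀ := by
  set Z := residual A W1 W2
  have hA' : A.IsSymm := isHermitian_iff_isSymm.1 hA.isHermitian
  have e2' : lam • W2ᵀ = W1 * Z := by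
    rw [← transpose_smul, e2, transpose_mul, transpose_transpose, (residual_isSymm hA' e2).eq]
  have hker : (W1 - W2ᵀ) * (Z + lam • 1) = 0 := by
    rw [Matrix.sub_mul, Matrix.mul_add, Matrix.mul_add, Matrix.mul_smul, Matrix.mul_smul,
      Matrix.mul_one, Matrix.mul_one, e1, e2']
    abel
  have hunit : IsUnit (Z + lam • 1).det := (isUnit_iff_isUnit_det _).1
    (PosDef.posSemidef_add (posSemidef_residual hA hlam.le e2) (PosDef.one.smul hlam)).isUnit
  rw [← sub_eq_zero, ← mul_nonsing_inv_cancel_right _ (W1 - W2ᵀ) hunit, hker, Matrix.zero_mul]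

lemma commute_mul_self_transpose (hA : A.IsSymm) (e2 : lam • W2 = residual A W2ᵀ W2 * W2) :
    Commute (W2 * W2ᵀ) A := by
  have := mul_mul_eq_mul_transpose hA (W1 := W2ᵀ) (by rwa [transpose_transpose])
  rwa [transpose_mul, transpose_transpose] at this

lemma one_sub_mul_mul_self_transpose (e2 : lam • W2 = residual A W2ᵀ W2 * W2) :
    (1 - W2 * W2ᵀ) * A * (W2 * W2ᵀ) = lam • (W2 * W2ᵀ) := by
  rw [← residual, ← Matrix.mul_assoc, ← e2, Matrix.smul_mul]

variable {l : m → ℝ}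

lemma posDef_conj_diagonal {U : Matrix m m ℝ} (hU : Uᵀ * U = 1) (hpos : ∀ i, 0 < l i) :
    (U * diagonal l * Uᵀ).PosDef := by
  simpa using (posDef_diagonal_iff.2 hpos).mul_mul_conjTranspose_same
    (vecMul_injective_iff_isUnit.2 ((isUnit_iff_isUnit_det U).2 (isUnit_det_of_left_inverse hU)))

lemma exists_finset_eq_diagonal (hpos : ∀ i, 0 < l i) (hl : Function.Injective l)
    {D : Matrix m m ℝ} (hD : D.PosSemidef) (hcomm : Commute D (diagonal l))
    (heq : (1 - D) * diagonal l * D = lam • D) :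
    ∃ I : Finset m, (∀ i ∈ I, lam < l i) ∧ I.card = D.rank ∧
      D = diagonal (fun i => if i ∈ I then 1 - lam / l i else 0) := by
  obtain ⟨d, rfl⟩ : ∃ d, D = diagonal d :=
    ⟨_, (isDiag_of_commute_diagonal_s13 hl hcomm).diagonal_diag.symm⟩
  have hd : ∀ i, d i ≠ 0 → (1 - d i) * l i = lam := fun i hi => by
    have := congrFun (congrFun heq i) i
    simp only [Matrix.sub_mul, Matrix.one_mul, diagonal_mul_diagonal, diagonal_sub,
      diagonal_apply_eq, Matrix.smul_apply, smul_eq_mul] at this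
    exact mul_right_cancel₀ hi (by linear_combination this)
  have hd0 : ∀ i, 0 ≤ d i := posSemidef_diagonal_iff.1 hD
  refine ⟨Finset.univ.filter (fun i => d i ≠ 0), fun i hi => ?_, ?_, ?_⟩
  · have hi := (Finset.mem_filter.1 hi).2
    nlinarith [hd i hi, hpos i, lt_of_le_of_ne (hd0 i) (Ne.symm hi)]
  · rw [rank_diagonal, Fintype.card_subtype]
  · congr 1
    funext i
    split_ifs with hi
    · have := hd i (Finset.mem_filter.1 hi).2
      field_simp [(hpos i).ne']
      linarith
    · simpa using hi

lemma exists_finset_eq_conj_diagonal {U : Matrix m m ℝ} (hU : Uᵀ * U = 1)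
    (hpos : ∀ i, 0 < l i) (hl : Function.Injective l) {M : Matrix m m ℝ} (hM : M.PosSemidef)
    (hcomm : Commute M (U * diagonal l * Uᵀ))
    (heq : (1 - M) * (U * diagonal l * Uᵀ) * M = lam • M) :
    ∃ I : Finset m, (∀ i ∈ I, lam < l i) ∧ I.card = M.rank ∧
      M = U * diagonal (fun i => if i ∈ I then 1 - lam / l i else 0) * Uᵀ := by
  have hstar : star U = Uᵀ := by rw [star_eq_conjTranspose, conjTranspose_eq_transpose_of_trivial]
  let u : unitary (Matrix m m ℝ) := ⟨U, mem_unitaryGroup_iff'.2 (hstar ▸ hU)⟩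
  let φ := Unitary.conjStarAlgAut ℝ (Matrix m m ℝ) u
  have hφ : ∀ D, U * D * Uᵀ = φ D := fun D => by rw [← hstar]; rfl
  have hdet : IsUnit U.det := (isUnit_iff_isUnit_det U).1 (Unitary.isUnit_coe (U := u))
  obtain ⟨D, rfl⟩ : ∃ D, φ D = M := φ.surjective M
  rw [hφ] at hcomm heq
  rw [← map_one φ, ← map_sub, ← map_mul, ← map_mul, ← map_smul] at heq
  have hD : D.PosSemidef := by
    rwa [← hφ, ← hstar,
      IsUnit.posSemidef_star_right_conjugate_iff (Unitary.isUnit_coe (U := u))] at hM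
  obtain ⟨I, hI, hcard, hDI⟩ := exists_finset_eq_diagonal hpos hl hD
    (by simpa using hcomm.map φ.symm) (φ.injective heq)
  refine ⟨I, hI, ?_, by rw [hφ, hDI]⟩
  rw [hcard, ← hφ, rank_mul_eq_left_of_isUnit_det _ _ (by rwa [det_transpose]),
    rank_mul_eq_right_of_isUnit_det _ _ hdet]

end SumLoss

theorem sum_critical_points_general {m n k : ℕ} (lam : ℝ) (hlam : 0 < lam)
    (X : Matrix (Fin m) (Fin n) ℝ)
    (U : Matrix (Fin m) (Fin m) ℝ) (l : Fin m → ℝ)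
    (hU : Uᵀ * U = 1)
    (hXXt : X * Xᵀ = U * Matrix.diagonal l * Uᵀ)
    (hpos : ∀ i, 0 < l i)
    (hdist : ∀ i j : Fin m, i ≠ j → l i ≠ l j)
    (W1 : Matrix (Fin k) (Fin m) ℝ) (W2 : Matrix (Fin m) (Fin k) ℝ)
    (h1 : W2ᵀ * (W2 * W1 - 1) * (X * Xᵀ) + lam • W1 = 0)
    (h2 : (W2 * W1 - 1) * (X * Xᵀ) * W1ᵀ + lam • W2 = 0) :
    W1 = W2ᵀ ∧
      ∃ I : Finset (Fin m), (∀ i ∈ I, lam < l i) ∧ I.card ≤ k ∧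
        W2 * W1 =
          U * Matrix.diagonal (fun i => if i ∈ I then 1 - lam / l i else 0) * Uᵀ := by
  open SumLoss in
  rw [hXXt] at h1 h2
  have hA := posDef_conj_diagonal hU hpos
  have e2 := smul_decoder_eq h2
  obtain rfl := encoder_eq_transpose hA hlam (smul_encoder_eq h1) e2
  rw [transpose_transpose] at e2
  obtain ⟨I, hI, hcard, hM⟩ := exists_finset_eq_conj_diagonal hU hpos
    (fun i j hij => not_imp_not.1 (hdist i j) hij)
    (by simpa using posSemidef_self_mul_conjTranspose W2)
    (commute_mul_self_transpose (isHermitian_iff_isSymm.1 hA.isHermitian) e2)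
    (one_sub_mul_mul_self_transpose e2)
  exact ⟨rfl, I, hI, hcard ▸ (rank_mul_le_left _ _).trans (rank_le_width W2), hM⟩

/-- At a critical point of the sum loss `L_σ`, the encoder is the transpose of
the decoder and `W₂W₁ = U D Uᵀ` where `D` is diagonal with entries `1 − λ/λᵢ`
on an index set `𝓘 ⊆ {i : λᵢ > λ}` of size at most `k` and `0` elsewhere. -/
theorem sum_critical_points {m n k : ℕ} (lam : ℝ) (hlam : 0 < lam)
    (X : Matrix (Fin m) (Fin n) ℝ)
    (U : Matrix (Fin m) (Fin m) ℝ) (l : Fin m → ℝ)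
    (hU : Uᵀ * U = 1)
    (hXXt : X * Xᵀ = U * Matrix.diagonal l * Uᵀ)
    (hpos : ∀ i, 0 < l i)
    (hdist : ∀ i j : Fin m, i ≠ j → l i ≠ l j)
    (hne : ∀ i, l i ≠ lam)
    (W1 : Matrix (Fin k) (Fin m) ℝ) (W2 : Matrix (Fin m) (Fin k) ℝ)
    (h1 : W2ᵀ * (W2 * W1 - 1) * (X * Xᵀ) + lam • W1 = 0)
    (h2 : (W2 * W1 - 1) * (X * Xᵀ) * W1ᵀ + lam • W2 = 0) :
    W1 = W2ᵀ ∧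
      ∃ I : Finset (Fin m), (∀ i ∈ I, lam < l i) ∧ I.card ≤ k ∧
        W2 * W1 =
          U * Matrix.diagonal (fun i => if i ∈ I then 1 - lam / l i else 0) * Uᵀ :=
  sum_critical_points_general lam hlam X U l hU hXXt hpos hdist W1 W2 h1 h2
end

section
/- Let λ > 0 and X ∈ ℝ^{m×n}. Let U_𝓘 ∈ ℝ^{m×ℓ} (ℓ ≤ k) have orthonormal columns that are eigenvectors of XXᵀ with eigenvalues exceeding λ, i.e. U_𝓘ᵀU_𝓘 = I_ℓ and XXᵀU_𝓘 = U_𝓘Λ_𝓘 with Λ_𝓘 ∈ ℝ^{ℓ×ℓ} diagonal and every diagonal entry of Λ_𝓘 strictly greater than λ. Let O ∈ ℝ^{k×ℓ} satisfy OᵀO = I_ℓ, and set W₂ = U_𝓘 (I_ℓ − λΛ_𝓘⁻¹)^{1/2} Oᵀ and W₁ = W₂ᵀ. Then (W₁, W₂) is a critical point of the sum loss L_σ: it satisfies W₂ᵀ(W₂W₁ − I_m)XXᵀ + λW₁ = 0 and (W₂W₁ − I_m)XXᵀW₁ᵀ + λW₂ = 0. -/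
/-!
With `D = (I − λΛ⁻¹)^{1/2}` one has `W₂W₁ = U D² Uᵀ`, and since `U` has orthonormal columns
spanning an invariant subspace of `XXᵀ`, both gradients collapse to `O D ((D² − I)Λ + λI) Uᵀ`
and `U ((D² − I)Λ + λI) D Oᵀ`; the middle factor vanishes entry by entry.
-/

open Matrix

namespace Matrix

variable {R m l : Type*} [CommRing R] [Fintype m] [Fintype l] [DecidableEq m] [DecidableEq l]

theorem mul_mul_transpose_sub_one_mul {U : Matrix m l R} (hU : Uᵀ * U = 1)
    (E : Matrix l l R) : (U * E * Uᵀ - 1) * U = U * (E - 1) := by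
  rw [Matrix.sub_mul, Matrix.mul_assoc, hU, Matrix.mul_one, Matrix.one_mul, Matrix.mul_sub,
    Matrix.mul_one]

theorem transpose_mul_mul_mul_transpose_sub_one {U : Matrix m l R} (hU : Uᵀ * U = 1)
    (E : Matrix l l R) : Uᵀ * (U * E * Uᵀ - 1) = (E - 1) * Uᵀ := by
  rw [Matrix.mul_sub, ← Matrix.mul_assoc, ← Matrix.mul_assoc, hU, Matrix.one_mul,
    Matrix.mul_one, Matrix.sub_mul, Matrix.one_mul]

end Matrix

def IsSumLossCritical {R m n k : Type*} [CommRing R] [Fintype m] [Fintype n] [Fintype k]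
    [DecidableEq m] (X : Matrix m n R) (c : R) (W₁ : Matrix k m R) (W₂ : Matrix m k R) :
    Prop :=
  W₂ᵀ * (W₂ * W₁ - 1) * (X * Xᵀ) + c • W₁ = 0 ∧ (W₂ * W₁ - 1) * (X * Xᵀ) * W₁ᵀ + c • W₂ = 0

theorem isSumLossCritical_of_eigen {R m n k l : Type*} [CommRing R] [Fintype m] [Fintype n]
    [Fintype k] [Fintype l] [DecidableEq m] [DecidableEq l]
    {X : Matrix m n R} {c : R} {U : Matrix m l R} {L D : Matrix l l R} {O : Matrix k l R}
    (hU : Uᵀ * U = 1) (hO : Oᵀ * O = 1) (hXU : X * Xᵀ * U = U * L) (hL : Lᵀ = L)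
    (hD : (D * Dᵀ - 1) * L = -c • 1) :
    IsSumLossCritical X c (U * D * Oᵀ)ᵀ (U * D * Oᵀ) := by
  set W := U * D * Oᵀ
  have hWT : Wᵀ = O * Dᵀ * Uᵀ := by
    simp only [W, transpose_mul, transpose_transpose, Matrix.mul_assoc]
  have hWW : W * Wᵀ = U * (D * Dᵀ) * Uᵀ := by
    rw [hWT]
    simp only [W, Matrix.mul_assoc]
    rw [← Matrix.mul_assoc Oᵀ O, hO, Matrix.one_mul]
  have hUX : Uᵀ * (X * Xᵀ) = L * Uᵀ := by
    simpa [transpose_mul, Matrix.mul_assoc, hL] using congrArg transpose hXU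
  constructor
  · calc Wᵀ * (W * Wᵀ - 1) * (X * Xᵀ) + c • Wᵀ
        = O * Dᵀ * ((D * Dᵀ - 1) * L) * Uᵀ + c • Wᵀ := by
          rw [hWW, hWT, Matrix.mul_assoc (O * Dᵀ), transpose_mul_mul_mul_transpose_sub_one hU,
            Matrix.mul_assoc (O * Dᵀ), Matrix.mul_assoc (D * Dᵀ - 1), hUX]
          simp only [Matrix.mul_assoc]
      _ = 0 := by
          rw [hD, hWT]
          simp
  · calc (W * Wᵀ - 1) * (X * Xᵀ) * Wᵀᵀ + c • W
        = U * ((D * Dᵀ - 1) * L) * D * Oᵀ + c • W := by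
          rw [transpose_transpose, hWW, Matrix.mul_assoc, show W = U * (D * Oᵀ) from
            Matrix.mul_assoc _ _ _, ← Matrix.mul_assoc (X * Xᵀ), hXU, Matrix.mul_assoc U L,
            ← Matrix.mul_assoc _ U, mul_mul_transpose_sub_one_mul hU]
          simp only [Matrix.mul_assoc]
      _ = 0 := by
          rw [hD]
          simp [W, Matrix.mul_assoc]

theorem Real.sqrt_one_sub_div_mul_self_sub_one_mul {a b : ℝ} (ha : 0 < a) (hba : b ≤ a) :
    (√(1 - b / a) * √(1 - b / a) - 1) * a = -b := by
  rw [Real.mul_self_sqrt (by rwa [sub_nonneg, div_le_one ha])]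
  field_simp
  ring

theorem sum_critical_construction_general {m n k l : ℕ}
    (lam : ℝ) (hlam : 0 < lam)
    (X : Matrix (Fin m) (Fin n) ℝ)
    (UI : Matrix (Fin m) (Fin l) ℝ) (lamI : Fin l → ℝ)
    (hUI : UIᵀ * UI = 1)
    (hEig : X * Xᵀ * UI = UI * Matrix.diagonal lamI)
    (hgt : ∀ i, lam < lamI i)
    (O : Matrix (Fin k) (Fin l) ℝ) (hO : Oᵀ * O = 1)
    (W1 : Matrix (Fin k) (Fin m) ℝ) (W2 : Matrix (Fin m) (Fin k) ℝ)
    (hW2 : W2 = UI * Matrix.diagonal (fun i => Real.sqrt (1 - lam / lamI i)) * Oᵀ)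
    (hW1 : W1 = W2ᵀ) :
    W2ᵀ * (W2 * W1 - 1) * (X * Xᵀ) + lam • W1 = 0 ∧
      (W2 * W1 - 1) * (X * Xᵀ) * W1ᵀ + lam • W2 = 0 := by
  subst hW1 hW2
  refine isSumLossCritical_of_eigen hUI hO hEig (diagonal_transpose lamI) ?_
  rw [diagonal_transpose, diagonal_mul_diagonal, smul_one_eq_diagonal, ← diagonal_one,
    diagonal_sub, diagonal_mul_diagonal]
  exact congrArg diagonal <| funext fun i ↦
    Real.sqrt_one_sub_div_mul_self_sub_one_mul (hlam.trans (hgt i)) (hgt i).le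

/-- For `U_𝓘` with orthonormal eigenvector columns of `XXᵀ` whose eigenvalues
all exceed `λ`, and `O` with orthonormal columns, the pair
`W₂ = U_𝓘 (I − λΛ_𝓘⁻¹)^{1/2} Oᵀ`, `W₁ = W₂ᵀ` is a critical point of the
sum loss `L_σ`. -/
theorem sum_critical_construction {m n k l : ℕ} (hlk : l ≤ k)
    (lam : ℝ) (hlam : 0 < lam)
    (X : Matrix (Fin m) (Fin n) ℝ)
    (UI : Matrix (Fin m) (Fin l) ℝ) (lamI : Fin l → ℝ)
    (hUI : UIᵀ * UI = 1)
    (hEig : X * Xᵀ * UI = UI * Matrix.diagonal lamI)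
    (hgt : ∀ i, lam < lamI i)
    (O : Matrix (Fin k) (Fin l) ℝ) (hO : Oᵀ * O = 1)
    (W1 : Matrix (Fin k) (Fin m) ℝ) (W2 : Matrix (Fin m) (Fin k) ℝ)
    (hW2 : W2 = UI * Matrix.diagonal (fun i => Real.sqrt (1 - lam / lamI i)) * Oᵀ)
    (hW1 : W1 = W2ᵀ) :
    W2ᵀ * (W2 * W1 - 1) * (X * Xᵀ) + lam • W1 = 0 ∧
      (W2 * W1 - 1) * (X * Xᵀ) * W1ᵀ + lam • W2 = 0 :=
  sum_critical_construction_general lam hlam X UI lamI hUI hEig hgt O hO W1 W2 hW2 hW1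
end

section
/- Let λ > 0 and X ∈ ℝ^{m×n} with XXᵀ = UΛUᵀ, where U ∈ ℝ^{m×m} is orthogonal and Λ is diagonal with pairwise distinct positive diagonal entries λ₁,…,λ_m, each distinct from λ. Define (XXᵀ)^{-1/2} = UΛ^{-1/2}Uᵀ. Suppose W₁ ∈ ℝ^{k×m}, W₂ ∈ ℝ^{m×k} are such that the pair (W₁(XXᵀ)^{-1/2}, (XXᵀ)^{-1/2}W₂) is a critical point of the sum loss L_σ. Then W₁ = W₂ᵀ and there exist an index set 𝓘 ⊆ {i : λᵢ > λ} with |𝓘| = ℓ ≤ k, and O ∈ ℝ^{k×ℓ} with OᵀO = I_ℓ, such that W₂ = U_𝓘 Λ_𝓘^{1/2} (I_ℓ − λΛ_𝓘⁻¹)^{1/2} Oᵀ, where U_𝓘 ∈ ℝ^{m×ℓ} consists of the columns of U indexed by 𝓘 and Λ_𝓘 is the corresponding diagonal block of Λ. This is exactly the stationary-point form W₀ = U_𝓘 Σ_𝓘 (I_ℓ − σ²Σ_𝓘⁻²)^{1/2}Oᵀ of probabilistic PCA with noise variance σ² = λ and Σ_𝓘 = Λ_𝓘^{1/2}. (pPCA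 Theorem) -/
open Matrix

variable {m k : ℕ}

lemma fact_expand (lam : ℝ) (S K : Matrix (Fin m) (Fin m) ℝ) :
    (S + lam • 1) * ((S - lam • 1) * K) = S * (S * K) - (lam ^ 2) • K := by
  have h1 : (S - lam • 1) * K = S * K - lam • K := by
    rw [Matrix.sub_mul, Matrix.smul_mul, Matrix.one_mul]
  rw [h1]
  simp only [Matrix.add_mul, Matrix.mul_sub, Matrix.smul_mul, Matrix.mul_smul,
    Matrix.one_mul, smul_sub, smul_add, smul_smul, ← sq]
  abel

set_option maxHeartbeats 2000000 in
lemma key_core (lam : ℝ) (hlam : 0 < lam) (l : Fin m → ℝ) (hpos : ∀ i, 0 < l i)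
    (hdist : ∀ i j : Fin m, i ≠ j → l i ≠ l j) (hne : ∀ i, l i ≠ lam)
    (A : Matrix (Fin k) (Fin m) ℝ) (B : Matrix (Fin m) (Fin k) ℝ)
    (e1 : lam • A = Bᵀ * Matrix.diagonal l - Bᵀ * (B * (A * Matrix.diagonal l)))
    (e2 : lam • B = Matrix.diagonal l * Aᵀ - B * (A * (Matrix.diagonal l * Aᵀ))) :
    A = Bᵀ ∧ (∀ i j, i ≠ j → (B * Bᵀ) i j = 0) ∧
      (∀ i, (B * Bᵀ) i i = 0 ∨ (lam < l i ∧ (B * Bᵀ) i i = 1 - lam / l i)) := by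
  set L : Matrix (Fin m) (Fin m) ℝ := Matrix.diagonal l with hL
  clear_value L
  set C : Matrix (Fin m) (Fin m) ℝ := B * A with hC
  clear_value C
  have hCt : Cᵀ = Aᵀ * Bᵀ := by rw [hC, Matrix.transpose_mul]
  have hP0 : lam • (B * Bᵀ) = L * Cᵀ - C * (L * Cᵀ) := by
    calc lam • (B * Bᵀ) = (lam • B) * Bᵀ := by rw [Matrix.smul_mul]
      _ = _ := by
        rw [e2, hCt, hC]
        simp only [Matrix.sub_mul, Matrix.mul_assoc]
  have hDsym : L * Cᵀ = C * L := by
    have h2 : lam • (B * Bᵀ) = C * L - C * (L * Cᵀ) := by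
      have := congrArg Matrix.transpose hP0
      simpa [Matrix.transpose_mul, Matrix.mul_assoc, hL, Matrix.diagonal_transpose,
        Matrix.transpose_sub] using this
    exact sub_left_injective (hP0.symm.trans h2)
  set S : Matrix (Fin m) (Fin m) ℝ := L - C * L with hS
  clear_value S
  have hSsym : Sᵀ = S := by
    rw [hS, Matrix.transpose_sub, Matrix.transpose_mul, hL, Matrix.diagonal_transpose, ← hL,
      ← hDsym]
  have hSapp : ∀ i j, S j i = S i j := fun i j => by
    conv_lhs => rw [← hSsym]
    exact Matrix.transpose_apply S j i
  have hP : lam • (B * Bᵀ) = C * S := by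
    rw [hP0, hS, Matrix.mul_sub, hDsym]
  have e1' : lam • A = Bᵀ * S := by
    rw [e1, hS, Matrix.mul_sub, hC, Matrix.mul_assoc]
  have e2' : lam • B = S * Aᵀ := by
    rw [e2, hS, Matrix.sub_mul, hC]
    simp only [Matrix.mul_assoc]
  have hN : lam • (Aᵀ * A) = Cᵀ * S := by
    calc lam • (Aᵀ * A) = Aᵀ * (lam • A) := by rw [Matrix.mul_smul]
      _ = _ := by rw [e1', hCt, Matrix.mul_assoc]
  have hCP : lam • C = (B * Bᵀ) * S := by
    calc lam • C = B * (lam • A) := by rw [Matrix.mul_smul, hC]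
      _ = _ := by rw [e1', Matrix.mul_assoc]
  have hCS2 : (lam ^ 2) • C = C * (S * S) := by
    have : lam • (lam • C) = (lam • (B * Bᵀ)) * S := by rw [hCP, Matrix.smul_mul]
    rw [hP, Matrix.mul_assoc] at this
    rw [← this, smul_smul, sq]
  have hS2C : S * (S * Cᵀ) = (lam ^ 2) • Cᵀ := by
    have := congrArg Matrix.transpose hCS2
    simp only [Matrix.transpose_smul, Matrix.transpose_mul, hSsym, Matrix.mul_assoc] at this
    exact this.symm
  have hKsym : S * C = Cᵀ * S := by
    have h1 : (Cᵀ * S)ᵀ = S * C := by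
      rw [Matrix.transpose_mul, hSsym, Matrix.transpose_transpose]
    have h2 : (lam • (Aᵀ * A))ᵀ = lam • (Aᵀ * A) := by
      simp [Matrix.transpose_smul, Matrix.transpose_mul]
    rw [← hN, h2, hN] at h1
    exact h1.symm
  -- inverse diagonal
  set Linv : Matrix (Fin m) (Fin m) ℝ := Matrix.diagonal (fun i => (l i)⁻¹) with hLinv
  clear_value Linv
  have hLne : ∀ i, l i ≠ 0 := fun i => ne_of_gt (hpos i)
  have hLLinv : L * Linv = 1 := by
    rw [hL, hLinv, Matrix.diagonal_mul_diagonal]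
    rw [show (fun i => l i * (l i)⁻¹) = fun _ => (1:ℝ) from funext fun i =>
      mul_inv_cancel₀ (hLne i)]
    exact Matrix.diagonal_one
  have hLinvL : Linv * L = 1 := by
    rw [hLinv, hL, Matrix.diagonal_mul_diagonal]
    rw [show (fun i => (l i)⁻¹ * l i) = fun _ => (1:ℝ) from funext fun i =>
      inv_mul_cancel₀ (hLne i)]
    exact Matrix.diagonal_one
  have hCform : C = 1 - S * Linv := by
    have h0 : C * L = L - S := by rw [hS, sub_sub_cancel]
    have h1 : C = (L - S) * Linv := by
      rw [← h0, Matrix.mul_assoc, hLLinv, Matrix.mul_one]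
    rw [h1, Matrix.sub_mul, hLLinv]
  have hCtform : Cᵀ = 1 - Linv * S := by
    have := congrArg Matrix.transpose hCform
    simpa [Matrix.transpose_sub, Matrix.transpose_mul, hSsym, hLinv,
      Matrix.diagonal_transpose] using this
  have hKform : Cᵀ * S = S - Linv * (S * S) := by
    rw [hCtform, Matrix.sub_mul, Matrix.one_mul, Matrix.mul_assoc]
  have hSC' : S * C = S - S * (S * Linv) := by
    rw [hCform, Matrix.mul_sub, Matrix.mul_one]
  have h1SL : S * (S * Linv) = Linv * (S * S) := by
    have h := hKsym
    rw [hSC', hKform] at h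
    exact sub_right_injective h
  have h3SL : L * (S * (S * Linv)) = S * S := by
    rw [h1SL, ← Matrix.mul_assoc, hLLinv, Matrix.one_mul]
  have hS2L : L * (S * S) = S * (S * L) := by
    have h4 := congrArg (fun M => M * L) h3SL
    simp only [Matrix.mul_assoc, hLinvL, Matrix.mul_one] at h4
    exact h4
  set t : Fin m → ℝ := fun i => (S * S) i i with ht
  have hToff : ∀ i j : Fin m, i ≠ j → (S * S) i j = 0 := by
    intro i j hij
    have h : l i * (S * S) i j = (S * S) i j * l j := by
      calc l i * (S * S) i j = (L * (S * S)) i j := by rw [hL, Matrix.diagonal_mul]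
        _ = (S * (S * L)) i j := congrFun (congrFun hS2L i) j
        _ = ((S * S) * L) i j := by rw [← Matrix.mul_assoc]
        _ = (S * S) i j * l j := by rw [hL, Matrix.mul_diagonal]
    have hx : (S * S) i j * (l j - l i) = 0 := by linear_combination -h
    exact (mul_eq_zero.mp hx).resolve_right (sub_ne_zero.mpr (hdist j i hij.symm))
  have htnn : ∀ i, 0 ≤ t i := by
    intro i
    have : t i = ∑ a, (S i a)^2 := by
      rw [ht]
      simp only [Matrix.mul_apply]
      exact Finset.sum_congr rfl fun a _ => by rw [hSapp a i, sq]
    rw [this]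
    exact Finset.sum_nonneg fun a _ => sq_nonneg _
  -- quadratic form of S is nonneg
  have hSsum : S = lam • (Aᵀ * A) + Linv * (S * S) := by
    rw [hN, hKform]; simp
  have hquad : ∀ x : Fin m → ℝ, 0 ≤ x ⬝ᵥ S.mulVec x := by
    intro x
    rw [hSsum, Matrix.add_mulVec, dotProduct_add]
    have h1 : x ⬝ᵥ (lam • (Aᵀ * A)).mulVec x = lam * ((A.mulVec x) ⬝ᵥ (A.mulVec x)) := by
      rw [Matrix.smul_mulVec, dotProduct_smul, ← Matrix.mulVec_mulVec,
        Matrix.dotProduct_mulVec, Matrix.vecMul_transpose, smul_eq_mul]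
    have h2 : x ⬝ᵥ (Linv * (S * S)).mulVec x = ∑ i, (l i)⁻¹ * t i * (x i)^2 := by
      unfold dotProduct Matrix.mulVec
      refine Finset.sum_congr rfl fun i _ => ?_
      have : (fun j => (Linv * (S * S)) i j) ⬝ᵥ x = (l i)⁻¹ * t i * x i := by
        unfold dotProduct
        rw [Finset.sum_eq_single i]
        · simp only [hLinv, Matrix.diagonal_mul, ht]
        · intro b _ hb
          simp only [hLinv, Matrix.diagonal_mul]
          rw [hToff i b (Ne.symm hb)]
          ring
        · intro hmem; exact absurd (Finset.mem_univ i) hmem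
      rw [this]; ring
    rw [h1, h2]
    have q1 : 0 ≤ lam * ((A.mulVec x) ⬝ᵥ (A.mulVec x)) :=
      mul_nonneg hlam.le (Finset.sum_nonneg fun a _ => mul_self_nonneg _)
    have q2 : 0 ≤ ∑ i, (l i)⁻¹ * t i * (x i)^2 :=
      Finset.sum_nonneg fun i _ => by
        have := htnn i
        have := (hpos i)
        positivity
    linarith
  -- cancellation lemma
  have hcancel : ∀ Y : Matrix (Fin m) (Fin m) ℝ, (S + lam • 1) * Y = 0 → Y = 0 := by
    intro Y hY
    ext i j
    set x : Fin m → ℝ := fun i' => Y i' j with hx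
    have hvec : (S + lam • 1).mulVec x = 0 := by
      funext i'
      have := congrFun (congrFun hY i') j
      simpa [Matrix.mulVec, dotProduct, Matrix.mul_apply, hx] using this
    have h0 : x ⬝ᵥ (S + lam • 1).mulVec x = 0 := by rw [hvec, dotProduct_zero]
    rw [Matrix.add_mulVec, dotProduct_add, Matrix.smul_mulVec,
      Matrix.one_mulVec, dotProduct_smul, smul_eq_mul] at h0
    have hq := hquad x
    have hxx : x ⬝ᵥ x ≤ 0 := by nlinarith
    have hzz : x ⬝ᵥ x = 0 := le_antisymm hxx (Finset.sum_nonneg fun a _ => mul_self_nonneg _)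
    have hsq : ∀ a ∈ Finset.univ, x a * x a = 0 :=
      (Finset.sum_eq_zero_iff_of_nonneg (fun a _ => mul_self_nonneg (x a))).mp hzz
    exact mul_self_eq_zero.mp (hsq i (Finset.mem_univ i))
  -- (S - lam)·K = 0 where K = Cᵀ*S
  have hS2K : S * (S * (Cᵀ * S)) = (lam ^ 2) • (Cᵀ * S) := by
    have h := congrArg (fun M => M * S) hS2C
    simp only [Matrix.mul_assoc, Matrix.smul_mul] at h
    exact h
  have hfact : (S + lam • 1) * ((S - lam • 1) * (Cᵀ * S)) = 0 := by
    rw [fact_expand, hS2K, sub_self]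
  have hSK0 : (S - lam • 1) * (Cᵀ * S) = 0 := hcancel _ hfact
  have hSKeq : S * (Cᵀ * S) = lam • (Cᵀ * S) := by
    have h := hSK0
    rw [Matrix.sub_mul, Matrix.smul_mul, Matrix.one_mul] at h
    exact sub_eq_zero.mp h
  -- off-diagonal of S vanishes
  have hKentry : ∀ i j : Fin m, (Cᵀ * S) i j = S i j - (l i)⁻¹ * (S * S) i j := by
    intro i j
    rw [hKform]
    simp only [Matrix.sub_apply, hLinv, Matrix.diagonal_mul]
  have hSLT : ∀ i j : Fin m, (S * (Linv * (S * S))) i j = S i j * ((l j)⁻¹ * t j) := by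
    intro i j
    rw [Matrix.mul_apply]
    rw [Finset.sum_eq_single j]
    · simp only [hLinv, Matrix.diagonal_mul, ht]
    · intro b _ hb
      simp only [hLinv, Matrix.diagonal_mul]
      rw [hToff b j hb]
      ring
    · intro hmem; exact absurd (Finset.mem_univ j) hmem
  have hSoff : ∀ i j : Fin m, i ≠ j → S i j = 0 := by
    intro i j hij
    have hA : (S * (Cᵀ * S)) i j = (S * S) i j - (S * (Linv * (S * S))) i j := by
      rw [hKform, Matrix.mul_sub, Matrix.sub_apply]
    have hB : (S * (Cᵀ * S)) i j = lam * (Cᵀ * S) i j := by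
      rw [hSKeq, Matrix.smul_apply, smul_eq_mul]
    have hK : (Cᵀ * S) i j = S i j := by
      rw [hKentry i j, hToff i j hij]
      ring
    rw [hA, hSLT, hToff i j hij, hK] at hB
    have hpos2 : 0 < lam + (l j)⁻¹ * t j := by
      have h1 : 0 ≤ (l j)⁻¹ * t j := mul_nonneg (inv_nonneg.mpr (hpos j).le) (htnn j)
      linarith
    have : S i j * (lam + (l j)⁻¹ * t j) = 0 := by linarith [hB]
    exact (mul_eq_zero.mp this).resolve_right (ne_of_gt hpos2)
  -- S is diagonal
  set sd : Fin m → ℝ := fun i => S i i with hsd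
  clear_value sd
  have hSdiag : S = Matrix.diagonal sd := by
    ext i j
    by_cases h : i = j
    · subst h; rw [Matrix.diagonal_apply_eq, hsd]
    · rw [Matrix.diagonal_apply_ne _ h, hSoff i j h]
  have htval : ∀ i, (S * S) i i = sd i ^ 2 := by
    intro i
    rw [hSdiag, Matrix.diagonal_mul_diagonal, Matrix.diagonal_apply_eq, sq]
  have hsnn : ∀ i, 0 ≤ sd i := by
    intro i
    have h := hKentry i i
    have hKii : (Cᵀ * S) i i = lam * (Aᵀ * A) i i := by
      rw [← hN, Matrix.smul_apply, smul_eq_mul]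
    have hAq : 0 ≤ (Aᵀ * A) i i := by
      rw [Matrix.mul_apply]
      exact Finset.sum_nonneg fun a _ => by
        rw [Matrix.transpose_apply]; exact mul_self_nonneg _
    have hsi : S i i = sd i := by rw [hsd]
    have hti : 0 ≤ (l i)⁻¹ * (S * S) i i :=
      mul_nonneg (inv_nonneg.mpr (hpos i).le) (htnn i)
    have hKnn : 0 ≤ (Cᵀ * S) i i := by
      rw [hKii]; exact mul_nonneg hlam.le hAq
    linarith [h, hKnn, hti, hsi]
  -- trichotomy for sd
  have htri : ∀ i, (sd i - lam) * (sd i * (l i - sd i)) = 0 := by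
    intro i
    have h := congrFun (congrFun hSKeq i) i
    have hSKii : (S * (Cᵀ * S)) i i = sd i * (Cᵀ * S) i i := by
      rw [Matrix.mul_apply, Finset.sum_eq_single i]
      · rw [hsd]
      · intro b _ hb; rw [hSoff i b (Ne.symm hb)]; ring
      · intro hmem; exact absurd (Finset.mem_univ i) hmem
    have hKiiL : l i * (Cᵀ * S) i i = sd i * l i - sd i ^ 2 := by
      rw [hKentry i i, htval i, show S i i = sd i from by rw [hsd], mul_sub, ← mul_assoc,
        mul_inv_cancel₀ (hLne i), one_mul]
      ring
    rw [hSKii, Matrix.smul_apply, smul_eq_mul] at h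
    linear_combination (l i) * h + (lam - sd i) * hKiiL
  -- A = Bᵀ
  have hAB : A = Bᵀ := by
    have he1 : ∀ a i, lam * A a i = Bᵀ a i * sd i := by
      intro a i
      have := congrFun (congrFun e1' a) i
      rw [Matrix.smul_apply, smul_eq_mul, hSdiag, Matrix.mul_diagonal] at this
      exact this
    have he2 : ∀ a i, lam * Bᵀ a i = A a i * sd i := by
      intro a i
      have h := congrArg Matrix.transpose e2'
      rw [Matrix.transpose_smul, Matrix.transpose_mul, hSsym] at h
      have := congrFun (congrFun h a) i
      rw [Matrix.smul_apply, smul_eq_mul, hSdiag, Matrix.mul_diagonal,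
        Matrix.transpose_transpose] at this
      exact this
    ext a i
    by_cases hcase : sd i = lam
    · have h1 := he1 a i
      rw [hcase] at h1
      exact mul_left_cancel₀ (ne_of_gt hlam)
        (by linear_combination h1 : lam * A a i = lam * Bᵀ a i)
    · have h1 := he1 a i
      have h2 := he2 a i
      have hA0 : A a i = 0 := by
        have hsq : (lam ^ 2 - sd i ^ 2) * A a i = 0 := by
          linear_combination lam * h1 + sd i * h2
        have hne2 : lam ^ 2 - sd i ^ 2 ≠ 0 := by
          intro hc
          have h0 : (sd i - lam) * (sd i + lam) = 0 := by linear_combination -hc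
          rcases mul_eq_zero.mp h0 with h | h
          · exact hcase (by linarith)
          · have := hsnn i; linarith
        exact (mul_eq_zero.mp hsq).resolve_left hne2
      rw [hA0] at h2 ⊢
      rw [zero_mul] at h2
      rw [(mul_eq_zero.mp h2).resolve_left (ne_of_gt hlam)]
  -- structure of B * Bᵀ
  have hPoff : ∀ i j, i ≠ j → (B * Bᵀ) i j = 0 := by
    intro i j hij
    have hc := congrFun (congrFun hP i) j
    rw [Matrix.smul_apply, smul_eq_mul] at hc
    have hCS : (C * S) i j = C i j * sd j := by
      rw [hSdiag, Matrix.mul_diagonal]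
    have hCij : C i j = 0 := by
      rw [hCform, Matrix.sub_apply, Matrix.one_apply_ne hij]
      have : (S * Linv) i j = S i j * (l j)⁻¹ := by rw [hLinv, Matrix.mul_diagonal]
      rw [this, hSoff i j hij]
      ring
    rw [hCS, hCij, zero_mul] at hc
    exact (mul_eq_zero.mp hc).resolve_left (ne_of_gt hlam)
  have hPdiagval : ∀ i, lam * (B * Bᵀ) i i = (1 - sd i * (l i)⁻¹) * sd i := by
    intro i
    have hc := congrFun (congrFun hP i) i
    rw [Matrix.smul_apply, smul_eq_mul] at hc
    have hCS : (C * S) i i = C i i * sd i := by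
      rw [hSdiag, Matrix.mul_diagonal]
    have hCii : C i i = 1 - sd i * (l i)⁻¹ := by
      rw [hCform, Matrix.sub_apply, Matrix.one_apply_eq]
      have : (S * Linv) i i = S i i * (l i)⁻¹ := by rw [hLinv, Matrix.mul_diagonal]
      rw [this, show S i i = sd i from by rw [hsd]]
    rw [hCS, hCii] at hc
    exact hc
  have hPnn : ∀ i, 0 ≤ (B * Bᵀ) i i := by
    intro i
    rw [Matrix.mul_apply]
    exact Finset.sum_nonneg fun a _ => by
      rw [Matrix.transpose_apply]; exact mul_self_nonneg _
  have hPcases : ∀ i, (B * Bᵀ) i i = 0 ∨ (lam < l i ∧ (B * Bᵀ) i i = 1 - lam / l i) := by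
    intro i
    rcases mul_eq_zero.mp (htri i) with h | h
    · -- sd i = lam
      have hslam : sd i = lam := by linarith [h]
      right
      have hval : lam * (B * Bᵀ) i i = (1 - lam * (l i)⁻¹) * lam := by
        rw [hPdiagval i, hslam]
      have hBB : (B * Bᵀ) i i = 1 - lam / l i := by
        rw [div_eq_mul_inv]
        have := mul_left_cancel₀ (ne_of_gt hlam)
          (show lam * (B * Bᵀ) i i = lam * (1 - lam * (l i)⁻¹) by
            rw [hval]; ring)
        exact this
      refine ⟨?_, hBB⟩
      have h0 : 0 ≤ 1 - lam / l i := hBB ▸ hPnn i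
      have hll : lam / l i ≤ 1 := by linarith
      have : lam ≤ l i := by
        rw [div_le_one (hpos i)] at hll
        exact hll
      rcases lt_or_eq_of_le this with h' | h'
      · exact h'
      · exact absurd h'.symm (hne i)
    · -- sd i = 0 or sd i = l i
      left
      rcases mul_eq_zero.mp h with h' | h'
      · have hval := hPdiagval i
        rw [h'] at hval
        have : lam * (B * Bᵀ) i i = 0 := by rw [hval]; ring
        exact (mul_eq_zero.mp this).resolve_left (ne_of_gt hlam)
      · have hsl : sd i = l i := by linarith [h']
        have hval := hPdiagval i
        rw [hsl] at hval
        have hz : (1 - l i * (l i)⁻¹) * l i = 0 := by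
          rw [mul_inv_cancel₀ (hLne i)]; ring
        rw [hz] at hval
        exact (mul_eq_zero.mp hval).resolve_left (ne_of_gt hlam)
  exact ⟨hAB, hPoff, hPcases⟩

set_option maxHeartbeats 2000000 in
/-- **pPCA Theorem.** Suppose `XXᵀ = UΛUᵀ` with `U` orthogonal and `Λ` diagonal
with pairwise distinct positive entries, each distinct from `λ`, and that
`(W₁(XXᵀ)^{-1/2}, (XXᵀ)^{-1/2}W₂)` is a critical point of the sum loss `L_σ`.
Then `W₁ = W₂ᵀ` and `W₂ = U_𝓘 Λ_𝓘^{1/2} (I − λΛ_𝓘⁻¹)^{1/2} Oᵀ` for some index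
set `𝓘 ⊆ {i : λᵢ > λ}` of size `ℓ ≤ k` and some `O` with orthonormal columns —
exactly the stationary-point form of probabilistic PCA with noise variance
`σ² = λ`. -/
theorem pPCA_theorem {m n k : ℕ} (lam : ℝ) (hlam : 0 < lam)
    (X : Matrix (Fin m) (Fin n) ℝ)
    (U : Matrix (Fin m) (Fin m) ℝ) (l : Fin m → ℝ)
    (hU : Uᵀ * U = 1)
    (hXXt : X * Xᵀ = U * Matrix.diagonal l * Uᵀ)
    (hpos : ∀ i, 0 < l i)
    (hdist : ∀ i j : Fin m, i ≠ j → l i ≠ l j)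
    (hne : ∀ i, l i ≠ lam)
    (W1 : Matrix (Fin k) (Fin m) ℝ) (W2 : Matrix (Fin m) (Fin k) ℝ)
    (R : Matrix (Fin m) (Fin m) ℝ)
    (hR : R = U * Matrix.diagonal (fun i => (Real.sqrt (l i))⁻¹) * Uᵀ)
    (h1 : (R * W2)ᵀ * ((R * W2) * (W1 * R) - 1) * (X * Xᵀ) + lam • (W1 * R) = 0)
    (h2 : ((R * W2) * (W1 * R) - 1) * (X * Xᵀ) * (W1 * R)ᵀ + lam • (R * W2) = 0) :
    W1 = W2ᵀ ∧
      ∃ (ℓ : ℕ) (_ : ℓ ≤ k) (e : Fin ℓ → Fin m),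
        Function.Injective e ∧ (∀ j, lam < l (e j)) ∧
          ∃ O : Matrix (Fin k) (Fin ℓ) ℝ, Oᵀ * O = 1 ∧
            W2 = U.submatrix id e *
              Matrix.diagonal
                (fun j => Real.sqrt (l (e j)) * Real.sqrt (1 - lam / l (e j))) * Oᵀ := by
  have hUU : U * Uᵀ = 1 := mul_eq_one_comm.mp hU
  set A0 : Matrix (Fin k) (Fin m) ℝ := W1 * R with hA0
  set B0 : Matrix (Fin m) (Fin k) ℝ := R * W2 with hB0
  set A : Matrix (Fin k) (Fin m) ℝ := A0 * U with hA
  set B : Matrix (Fin m) (Fin k) ℝ := Uᵀ * B0 with hB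
  clear_value A B
  have hBt : Bᵀ = B0ᵀ * U := by
    rw [hB, Matrix.transpose_mul, Matrix.transpose_transpose]
  have hB0B : B0 = U * B := by
    rw [hB, ← Matrix.mul_assoc, hUU, Matrix.one_mul]
  -- rearranged versions of h1, h2
  have h1' : lam • A0 = B0ᵀ * (X * Xᵀ) - B0ᵀ * (B0 * (A0 * (X * Xᵀ))) := by
    have he : B0ᵀ * (B0 * A0 - 1) * (X * Xᵀ)
        = B0ᵀ * (B0 * (A0 * (X * Xᵀ))) - B0ᵀ * (X * Xᵀ) := by
      rw [Matrix.mul_sub, Matrix.mul_one, Matrix.sub_mul]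
      simp only [Matrix.mul_assoc]
    rw [he] at h1
    have h4 : lam • A0 - (B0ᵀ * (X * Xᵀ) - B0ᵀ * (B0 * (A0 * (X * Xᵀ))))
        = B0ᵀ * (B0 * (A0 * (X * Xᵀ))) - B0ᵀ * (X * Xᵀ) + lam • A0 := by abel
    rw [h1] at h4
    exact sub_eq_zero.mp h4
  have h2' : lam • B0 = (X * Xᵀ) * A0ᵀ - B0 * (A0 * ((X * Xᵀ) * A0ᵀ)) := by
    have he : (B0 * A0 - 1) * (X * Xᵀ) * A0ᵀ
        = B0 * (A0 * ((X * Xᵀ) * A0ᵀ)) - (X * Xᵀ) * A0ᵀ := by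
      rw [Matrix.sub_mul, Matrix.sub_mul, Matrix.one_mul]
      simp only [Matrix.mul_assoc]
    rw [he] at h2
    have h4 : lam • B0 - ((X * Xᵀ) * A0ᵀ - B0 * (A0 * ((X * Xᵀ) * A0ᵀ)))
        = B0 * (A0 * ((X * Xᵀ) * A0ᵀ)) - (X * Xᵀ) * A0ᵀ + lam • B0 := by abel
    rw [h2] at h4
    exact sub_eq_zero.mp h4
  have hA0A : A0 = A * Uᵀ := by rw [hA, Matrix.mul_assoc, hUU, Matrix.mul_one]
  have c1 : ∀ (p : Type) (M : Matrix (Fin m) p ℝ), Uᵀ * (U * M) = M := fun p M => by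
    rw [← Matrix.mul_assoc, hU, Matrix.one_mul]
  have c2 : ∀ (p : Type) (M : Matrix (Fin m) p ℝ), U * (Uᵀ * M) = M := fun p M => by
    rw [← Matrix.mul_assoc, hUU, Matrix.one_mul]
  have e1 : lam • A = Bᵀ * Matrix.diagonal l - Bᵀ * (B * (A * Matrix.diagonal l)) := by
    have h5 := congrArg (fun M => M * U) h1'
    simp only [hXXt, hA0A, hB0B, Matrix.transpose_mul, Matrix.transpose_transpose,
      Matrix.smul_mul, Matrix.sub_mul, Matrix.mul_assoc, hU, hUU, Matrix.mul_one,
      Matrix.one_mul, c1, c2] at h5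
    exact h5
  have e2 : lam • B = Matrix.diagonal l * Aᵀ - B * (A * (Matrix.diagonal l * Aᵀ)) := by
    have h5 := congrArg (fun M => Uᵀ * M) h2'
    simp only [hXXt, hA0A, hB0B, Matrix.transpose_mul, Matrix.transpose_transpose,
      Matrix.mul_smul, Matrix.mul_sub, Matrix.mul_assoc, hU, hUU, Matrix.mul_one,
      Matrix.one_mul, c1, c2] at h5
    exact h5
  obtain ⟨hAB, hPoff, hPcases⟩ :=
    key_core lam hlam l hpos hdist hne A B e1 e2
  classical
  -- inverse of R
  have hsqrt_ne : ∀ i, Real.sqrt (l i) ≠ 0 := fun i => ne_of_gt (Real.sqrt_pos.mpr (hpos i))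
  set Rinv : Matrix (Fin m) (Fin m) ℝ :=
    U * Matrix.diagonal (fun i => Real.sqrt (l i)) * Uᵀ with hRinv
  have hdd : Matrix.diagonal (fun i => (Real.sqrt (l i))⁻¹) *
      Matrix.diagonal (fun i => Real.sqrt (l i)) = 1 := by
    rw [Matrix.diagonal_mul_diagonal]
    rw [show (fun i => (Real.sqrt (l i))⁻¹ * Real.sqrt (l i)) = fun _ => (1:ℝ) from
      funext fun i => inv_mul_cancel₀ (hsqrt_ne i)]
    exact Matrix.diagonal_one
  have hdd' : Matrix.diagonal (fun i => Real.sqrt (l i)) *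
      Matrix.diagonal (fun i => (Real.sqrt (l i))⁻¹) = 1 := by
    rw [Matrix.diagonal_mul_diagonal]
    rw [show (fun i => Real.sqrt (l i) * (Real.sqrt (l i))⁻¹) = fun _ => (1:ℝ) from
      funext fun i => mul_inv_cancel₀ (hsqrt_ne i)]
    exact Matrix.diagonal_one
  have hRRinv : R * Rinv = 1 := by
    rw [hR, hRinv]
    simp only [Matrix.mul_assoc, c1, c2]
    rw [← Matrix.mul_assoc (Matrix.diagonal fun i => (Real.sqrt (l i))⁻¹), hdd,
      Matrix.one_mul, hUU]
  have hRinvR : Rinv * R = 1 := by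
    rw [hR, hRinv]
    simp only [Matrix.mul_assoc, c1, c2]
    rw [← Matrix.mul_assoc (Matrix.diagonal fun i => Real.sqrt (l i)), hdd',
      Matrix.one_mul, hUU]
  -- W1 = W2ᵀ
  have hRt : Rᵀ = R := by
    rw [hR, Matrix.transpose_mul, Matrix.transpose_mul, Matrix.transpose_transpose,
      Matrix.diagonal_transpose, Matrix.mul_assoc]
  have hW1 : W1 = W2ᵀ := by
    have h6 : A0 * U = B0ᵀ * U := by rw [← hA, hAB, hBt]
    have h7 : A0 = B0ᵀ := by
      have h := congrArg (fun M => M * Uᵀ) h6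
      simpa only [Matrix.mul_assoc, hUU, Matrix.mul_one] using h
    have h8 : W1 * R = W2ᵀ * R := by
      rw [← hA0, h7, hB0, Matrix.transpose_mul, hRt]
    have h9 := congrArg (fun M => M * Rinv) h8
    simpa only [Matrix.mul_assoc, hRRinv, Matrix.mul_one] using h9
  -- W2 in terms of B
  have hW2 : W2 = U * (Matrix.diagonal (fun i => Real.sqrt (l i)) * B) := by
    have h9 : W2 = Rinv * B0 := by
      have := congrArg (fun M => Rinv * M) hB0
      simpa only [← Matrix.mul_assoc, hRinvR, Matrix.one_mul] using this.symm
    rw [h9, hB0B, hRinv]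
    simp only [Matrix.mul_assoc, c1, c2]
  -- index set
  have hBB' : ∀ i i', (B * Bᵀ) i i' = ∑ a, B i a * B i' a := fun i i' => by
    rw [Matrix.mul_apply]
    exact Finset.sum_congr rfl fun a _ => by rw [Matrix.transpose_apply]
  have hrow : ∀ i, (B * Bᵀ) i i = 0 → ∀ a, B i a = 0 := by
    intro i h0 a
    rw [hBB'] at h0
    exact mul_self_eq_zero.mp
      ((Finset.sum_eq_zero_iff_of_nonneg (fun a _ => mul_self_nonneg _)).mp h0 a
        (Finset.mem_univ a))
  set I : Finset (Fin m) := Finset.univ.filter (fun i => (B * Bᵀ) i i ≠ 0) with hI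
  set e : Fin I.card ↪o Fin m := I.orderEmbOfFin rfl with he
  have hemem : ∀ j, e j ∈ I := fun j => Finset.orderEmbOfFin_mem I rfl j
  have hpej : ∀ j, lam < l (e j) ∧ (B * Bᵀ) (e j) (e j) = 1 - lam / l (e j) := by
    intro j
    have hmem := hemem j
    exact (hPcases (e j)).resolve_left (Finset.mem_filter.mp hmem).2
  have hq : ∀ j, 0 < 1 - lam / l (e j) := by
    intro j
    have h := (hpej j).1
    have : lam / l (e j) < 1 := (div_lt_one (hpos (e j))).mpr h
    linarith
  have hqs : ∀ j, Real.sqrt (1 - lam / l (e j)) ≠ 0 :=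
    fun j => ne_of_gt (Real.sqrt_pos.mpr (hq j))
  set O : Matrix (Fin k) (Fin I.card) ℝ :=
    fun a j => B (e j) a / Real.sqrt (1 - lam / l (e j)) with hO
  have hOO : Oᵀ * O = 1 := by
    ext j j'
    rw [Matrix.mul_apply]
    have hterm : ∀ a, Oᵀ j a * O a j'
        = (B (e j) a * B (e j') a) /
          (Real.sqrt (1 - lam / l (e j)) * Real.sqrt (1 - lam / l (e j'))) := by
      intro a
      rw [Matrix.transpose_apply, hO]
      rw [div_mul_div_comm]
    rw [Finset.sum_congr rfl fun a _ => hterm a, ← Finset.sum_div, ← hBB']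
    by_cases hjj : j = j'
    · subst hjj
      rw [(hpej j).2, Real.mul_self_sqrt (hq j).le, div_self (ne_of_gt (hq j)),
        Matrix.one_apply_eq]
    · have hne' : e j ≠ e j' := fun hc => hjj (e.injective hc)
      rw [hPoff _ _ hne', zero_div, Matrix.one_apply_ne hjj]
  have hlk : I.card ≤ k := by
    have h1 : (Oᵀ * O).rank = I.card := by rw [hOO, Matrix.rank_one, Fintype.card_fin]
    have h2 : (Oᵀ * O).rank ≤ Oᵀ.rank := Matrix.rank_mul_le_left Oᵀ O
    have h3 : Oᵀ.rank ≤ k := by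
      have := Matrix.rank_le_card_width Oᵀ
      rwa [Fintype.card_fin] at this
    omega
  have himg : Finset.image (fun j => e j) Finset.univ = I := by
    apply Finset.eq_of_subset_of_card_le
    · intro x hx
      rcases Finset.mem_image.mp hx with ⟨j, _, rfl⟩
      exact hemem j
    · rw [Finset.card_image_of_injective _ e.injective, Finset.card_univ, Fintype.card_fin]
  have hfinal : W2 = U.submatrix id (fun j => e j) *
      Matrix.diagonal (fun j => Real.sqrt (l (e j)) * Real.sqrt (1 - lam / l (e j))) * Oᵀ := by
    rw [hW2]
    ext i a
    have hL : (U * (Matrix.diagonal (fun i => Real.sqrt (l i)) * B)) i a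
        = ∑ s, U i s * (Real.sqrt (l s) * B s a) := by
      rw [Matrix.mul_apply]
      exact Finset.sum_congr rfl fun s _ => by rw [Matrix.diagonal_mul]
    have hRHS : (U.submatrix id (fun j => e j) *
        Matrix.diagonal (fun j => Real.sqrt (l (e j)) * Real.sqrt (1 - lam / l (e j))) * Oᵀ) i a
        = ∑ j, U i (e j) * (Real.sqrt (l (e j)) * B (e j) a) := by
      rw [Matrix.mul_apply]
      refine Finset.sum_congr rfl fun j _ => ?_
      rw [Matrix.mul_diagonal, Matrix.transpose_apply, hO, Matrix.submatrix_apply, id_eq]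
      have hc : Real.sqrt (1 - lam / l (e j)) *
          (B (e j) a / Real.sqrt (1 - lam / l (e j))) = B (e j) a := by
        rw [mul_comm, div_mul_cancel₀ _ (hqs j)]
      rw [mul_assoc, mul_assoc, hc]
    rw [hL, hRHS]
    calc ∑ s, U i s * (Real.sqrt (l s) * B s a)
        = ∑ s ∈ I, U i s * (Real.sqrt (l s) * B s a) := by
          refine (Finset.sum_subset (Finset.subset_univ I) ?_).symm
          intro s _ hs
          have hps : (B * Bᵀ) s s = 0 := by
            by_contra hcon
            exact hs (by rw [hI]; exact Finset.mem_filter.mpr ⟨Finset.mem_univ s, hcon⟩)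
          rw [hrow s hps a]
          ring
      _ = ∑ j, U i (e j) * (Real.sqrt (l (e j)) * B (e j) a) := by
          refine (Finset.sum_bij (fun j _ => e j) (fun j _ => hemem j)
            (fun x _ y _ h => e.injective h) ?_ (fun j _ => rfl)).symm
          intro b hb
          have hb' : b ∈ Finset.image (fun j => e j) Finset.univ := himg.symm ▸ hb
          rcases Finset.mem_image.mp hb' with ⟨j, hj, hj'⟩
          exact ⟨j, hj, hj'⟩
  exact ⟨hW1, I.card, hlk, fun j => e j, e.injective, fun j => (hpej j).1, O, hOO, hfinal⟩
end

section
/- Let x, λ ∈ ℝ with x ≠ 0 and 0 < λ < x². Then for all w₁, w₂ ∈ ℝ, x²(1 − w₂w₁)² + λ(w₁² + w₂²) ≥ 2λ − λ²/x², and equality holds if and only if w₁ = w₂ and w₁² = 1 − λ/x². That is, the scalar sum loss has exactly two global minima, at w₁ = w₂ = ±√(1 − λx⁻²). -/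
/-- For `0 < λ < x²`, the scalar sum loss `x²(1 − w₂w₁)² + λ(w₁² + w₂²)` is
bounded below by `2λ − λ²/x²`, with equality exactly at the two points
`w₁ = w₂ = ±√(1 − λx⁻²)`. -/
theorem scalar_sum_loss_minima (x lam : ℝ) (hx : x ≠ 0)
    (h0 : 0 < lam) (h1 : lam < x ^ 2) :
    ∀ w1 w2 : ℝ,
      (2 * lam - lam ^ 2 / x ^ 2 ≤
          x ^ 2 * (1 - w2 * w1) ^ 2 + lam * (w1 ^ 2 + w2 ^ 2)) ∧
        (x ^ 2 * (1 - w2 * w1) ^ 2 + lam * (w1 ^ 2 + w2 ^ 2) =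
            2 * lam - lam ^ 2 / x ^ 2 ↔
          w1 = w2 ∧ w1 ^ 2 = 1 - lam / x ^ 2) := by
  have hx2 : (0:ℝ) < x ^ 2 := by positivity
  have hx2' : (x:ℝ) ^ 2 ≠ 0 := ne_of_gt hx2
  intro w1 w2
  have key : x ^ 2 * (1 - w2 * w1) ^ 2 + lam * (w1 ^ 2 + w2 ^ 2) -
      (2 * lam - lam ^ 2 / x ^ 2) =
      x ^ 2 * (w2 * w1 - (1 - lam / x ^ 2)) ^ 2 + lam * (w1 - w2) ^ 2 := by
    field_simp
    ring
  have hA : 0 ≤ x ^ 2 * (w2 * w1 - (1 - lam / x ^ 2)) ^ 2 := by positivity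
  have hB : 0 ≤ lam * (w1 - w2) ^ 2 := by positivity
  constructor
  · linarith
  · constructor
    · intro h
      have hsum : x ^ 2 * (w2 * w1 - (1 - lam / x ^ 2)) ^ 2 + lam * (w1 - w2) ^ 2 = 0 := by
        linarith
      have hA0 : x ^ 2 * (w2 * w1 - (1 - lam / x ^ 2)) ^ 2 = 0 := by linarith
      have hB0 : lam * (w1 - w2) ^ 2 = 0 := by linarith
      have he : w1 = w2 := by
        have := (mul_eq_zero.1 hB0).resolve_left (ne_of_gt h0)
        have := pow_eq_zero_iff (n := 2) (by norm_num) |>.1 this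
        linarith
      have hp : w2 * w1 = 1 - lam / x ^ 2 := by
        have := (mul_eq_zero.1 hA0).resolve_left hx2'
        have := pow_eq_zero_iff (n := 2) (by norm_num) |>.1 this
        linarith
      refine ⟨he, ?_⟩
      subst he
      linear_combination hp
    · rintro ⟨he, hsq⟩
      subst he
      have h3 : w1 * w1 = 1 - lam / x ^ 2 := by linear_combination hsq
      have h4 : x ^ 2 * (w1 * w1 - (1 - lam / x ^ 2)) ^ 2 = 0 := by rw [h3]; ring
      have h5 : lam * (w1 - w1) ^ 2 = 0 := by ring
      linarith [key]
end

section
/- Let x, λ ∈ ℝ with x ≠ 0 and λ ≥ x². Then for all w₁, w₂ ∈ ℝ, x²(1 − w₂w₁)² + λ(w₁² + w₂²) ≥ x², and equality holds if and only if w₁ = w₂ = 0. That is, the origin is the unique global minimum of the scalar sum loss when λ ≥ x². -/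
/-- For `λ ≥ x² > 0`, the scalar sum loss `x²(1 − w₂w₁)² + λ(w₁² + w₂²)` is
bounded below by `x²`, with equality exactly at the origin. -/
theorem scalar_sum_loss_origin (x lam : ℝ) (hx : x ≠ 0) (h1 : x ^ 2 ≤ lam) :
    ∀ w1 w2 : ℝ,
      (x ^ 2 ≤ x ^ 2 * (1 - w2 * w1) ^ 2 + lam * (w1 ^ 2 + w2 ^ 2)) ∧
        (x ^ 2 * (1 - w2 * w1) ^ 2 + lam * (w1 ^ 2 + w2 ^ 2) = x ^ 2 ↔
          w1 = 0 ∧ w2 = 0) := by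
  intro w1 w2
  have hx2 : 0 < x ^ 2 := by positivity
  constructor
  · nlinarith [sq_nonneg (w1 - w2), sq_nonneg (w1 * w2), sq_nonneg w1, sq_nonneg w2]
  constructor
  · intro h
    have heq : w1 = w2 := by
      have : x ^ 2 * (w1 - w2) ^ 2 = 0 := by
        nlinarith [sq_nonneg (w1 - w2), sq_nonneg (w1 * w2), sq_nonneg w1, sq_nonneg w2]
      have := mul_eq_zero.mp this
      rcases this with h' | h'
      · exact absurd h' (ne_of_gt hx2)
      · have := pow_eq_zero_iff (n := 2) (by norm_num) |>.mp h'
        linarith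
    have hprod : w1 * w2 = 0 := by
      have : x ^ 2 * (w1 * w2) ^ 2 = 0 := by
        nlinarith [sq_nonneg (w1 - w2), sq_nonneg (w1 * w2), sq_nonneg w1, sq_nonneg w2]
      rcases mul_eq_zero.mp this with h' | h'
      · exact absurd h' (ne_of_gt hx2)
      · exact pow_eq_zero_iff (n := 2) (by norm_num) |>.mp h'
    subst heq
    have : w1 = 0 := by nlinarith
    exact ⟨this, this⟩
  · rintro ⟨rfl, rfl⟩
    ring
end

section
/- Let X ∈ ℝ^{m×n}, W₁ ∈ ℝ^{k×m}, W₂ ∈ ℝ^{m×k}, and let e_n ∈ ℝ^n be the all-ones vector. Set X̄ = X − (1/n)X e_n e_nᵀ (the column-mean-centered data). Then for every b ∈ ℝ^m, ‖X − W₂W₁X − b e_nᵀ‖_F² ≥ ‖X̄ − W₂W₁X̄‖_F², with equality if and only if b = (1/n)(I_m − W₂W₁)X e_n. Hence a linear autoencoder with optimal bias on X is equivalent to a linear autoencoder without bias on the mean-centered data X̄. -/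
/-!
Write `A = (1 - W₂W₁)X` and `b₀ = (1/n) A eₙ`. The residual `B = A - b₀ eₙᵀ` is exactly
`X̄ - W₂W₁X̄` and has zero row sums, `B eₙ = 0`, so it is orthogonal in the trace inner product
to every rank-one matrix `d eₙᵀ`. Since `A - b eₙᵀ = B - (b - b₀) eₙᵀ`, Pythagoras gives
`‖A - b eₙᵀ‖_F² = ‖B‖_F² + n ‖b - b₀‖²`.
-/

open Matrix

namespace Matrix

variable {l m n : Type*} [Fintype l] [Fintype n]

section CommRing

variable {R : Type*} [CommRing R] [Fintype m]

theorem trace_transpose_mul_self_sub_of_mul_eq_zero {B : Matrix m n R} (d : Matrix m l R)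
    {e : Matrix n l R} (hBe : B * e = 0) :
    trace ((B - d * eᵀ)ᵀ * (B - d * eᵀ)) = trace (Bᵀ * B) + trace ((d * eᵀ)ᵀ * (d * eᵀ)) := by
  have hcross : trace (Bᵀ * (d * eᵀ)) = 0 := by
    rw [← Matrix.mul_assoc, trace_mul_comm, ← Matrix.mul_assoc, ← transpose_mul, hBe,
      transpose_zero, Matrix.zero_mul, trace_zero]
  have hcross' : trace ((d * eᵀ)ᵀ * B) = 0 := by
    rw [← trace_transpose, transpose_mul, transpose_transpose, hcross]
  simp only [transpose_sub, Matrix.sub_mul, Matrix.mul_sub, trace_sub, hcross, hcross']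
  ring

theorem trace_transpose_mul_self_mul_transpose (d : Matrix m l R) (e : Matrix n l R) :
    trace ((d * eᵀ)ᵀ * (d * eᵀ)) = trace (dᵀ * d * (eᵀ * e)) := by
  rw [transpose_mul, transpose_transpose, Matrix.mul_assoc, trace_mul_comm]
  simp only [Matrix.mul_assoc]

end CommRing

section Field

variable {K : Type*} [Field K] [DecidableEq l] {c : K} {e : Matrix n l K}

theorem sub_inv_smul_mul_mul_transpose_mul_eq_zero (hc : c ≠ 0) (he : eᵀ * e = c • 1)
    (A : Matrix m n K) : (A - c⁻¹ • (A * e) * eᵀ) * e = 0 := by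
  rw [Matrix.sub_mul, Matrix.smul_mul, Matrix.smul_mul, Matrix.mul_assoc (A * e), he,
    Matrix.mul_smul, Matrix.mul_one, smul_smul, inv_mul_cancel₀ hc, one_smul, sub_self]

variable [Fintype m]

theorem trace_transpose_mul_self_sub_mul_transpose (hc : c ≠ 0) (he : eᵀ * e = c • 1)
    (A : Matrix m n K) (b : Matrix m l K) :
    trace ((A - b * eᵀ)ᵀ * (A - b * eᵀ)) =
      trace ((A - c⁻¹ • (A * e) * eᵀ)ᵀ * (A - c⁻¹ • (A * e) * eᵀ)) +
        c * trace ((b - c⁻¹ • (A * e))ᵀ * (b - c⁻¹ • (A * e))) := by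
  have hsplit : A - b * eᵀ = (A - c⁻¹ • (A * e) * eᵀ) - (b - c⁻¹ • (A * e)) * eᵀ := by
    rw [Matrix.sub_mul]; abel
  rw [hsplit, trace_transpose_mul_self_sub_of_mul_eq_zero _
      (sub_inv_smul_mul_mul_transpose_mul_eq_zero hc he A),
    trace_transpose_mul_self_mul_transpose, he, Matrix.mul_smul, Matrix.mul_one, trace_smul,
    smul_eq_mul]

end Field

section Real

variable [Fintype m] [DecidableEq l] {c : ℝ} {e : Matrix n l ℝ}

theorem trace_transpose_mul_self_nonneg (d : Matrix m n ℝ) : 0 ≤ trace (dᵀ * d) := by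
  simpa only [conjTranspose_eq_transpose_of_trivial] using
    (posSemidef_conjTranspose_mul_self d).trace_nonneg

theorem trace_transpose_mul_self_eq_zero_iff {d : Matrix m n ℝ} : trace (dᵀ * d) = 0 ↔ d = 0 := by
  simpa only [conjTranspose_eq_transpose_of_trivial] using
    trace_conjTranspose_mul_self_eq_zero_iff (A := d)

theorem trace_centered_le (hc : 0 < c) (he : eᵀ * e = c • 1) (A : Matrix m n ℝ)
    (b : Matrix m l ℝ) :
    trace ((A - c⁻¹ • (A * e) * eᵀ)ᵀ * (A - c⁻¹ • (A * e) * eᵀ)) ≤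
      trace ((A - b * eᵀ)ᵀ * (A - b * eᵀ)) := by
  rw [trace_transpose_mul_self_sub_mul_transpose hc.ne' he A b]
  have := trace_transpose_mul_self_nonneg (b - c⁻¹ • (A * e))
  nlinarith

theorem trace_eq_trace_centered_iff (hc : 0 < c) (he : eᵀ * e = c • 1) (A : Matrix m n ℝ)
    (b : Matrix m l ℝ) :
    trace ((A - b * eᵀ)ᵀ * (A - b * eᵀ)) =
        trace ((A - c⁻¹ • (A * e) * eᵀ)ᵀ * (A - c⁻¹ • (A * e) * eᵀ)) ↔
      b = c⁻¹ • (A * e) := by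
  rw [trace_transpose_mul_self_sub_mul_transpose hc.ne' he A b, add_eq_left,
    mul_eq_zero_iff_left hc.ne', trace_transpose_mul_self_eq_zero_iff, sub_eq_zero]

end Real

end Matrix

/-- A linear autoencoder with bias is equivalent to a bias-free one on
mean-centered data: for all `b`,
`‖X − W₂W₁X − b eₙᵀ‖_F² ≥ ‖X̄ − W₂W₁X̄‖_F²` where `X̄ = X − (1/n)X eₙ eₙᵀ`,
with equality iff `b = (1/n)(I − W₂W₁)X eₙ`. -/
theorem bias_equals_mean_centering {m n k : ℕ} (hn : 0 < n)
    (X : Matrix (Fin m) (Fin n) ℝ)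
    (W1 : Matrix (Fin k) (Fin m) ℝ) (W2 : Matrix (Fin m) (Fin k) ℝ)
    (e : Matrix (Fin n) (Fin 1) ℝ) (he : e = fun _ _ => 1)
    (Xbar : Matrix (Fin m) (Fin n) ℝ)
    (hXbar : Xbar = X - (n : ℝ)⁻¹ • (X * e * eᵀ)) :
    ∀ b : Matrix (Fin m) (Fin 1) ℝ,
      (Matrix.trace ((Xbar - W2 * W1 * Xbar)ᵀ * (Xbar - W2 * W1 * Xbar)) ≤
          Matrix.trace ((X - W2 * W1 * X - b * eᵀ)ᵀ * (X - W2 * W1 * X - b * eᵀ))) ∧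
        (Matrix.trace ((X - W2 * W1 * X - b * eᵀ)ᵀ * (X - W2 * W1 * X - b * eᵀ)) =
            Matrix.trace ((Xbar - W2 * W1 * Xbar)ᵀ * (Xbar - W2 * W1 * Xbar)) ↔
          b = (n : ℝ)⁻¹ • ((1 - W2 * W1) * X * e)) := by
  intro b
  have hee : eᵀ * e = (n : ℝ) • 1 := by
    have hentry : ∀ i j, e i j = 1 := fun i j => by rw [he]
    ext i j
    simp [mul_apply, hentry, Subsingleton.elim i j]
  have hA : X - W2 * W1 * X = (1 - W2 * W1) * X := by
    rw [Matrix.sub_mul, Matrix.one_mul]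
  have hcentered : Xbar - W2 * W1 * Xbar =
      (1 - W2 * W1) * X - (n : ℝ)⁻¹ • ((1 - W2 * W1) * X * e) * eᵀ := by
    rw [hXbar]
    simp only [Matrix.sub_mul, Matrix.mul_sub, Matrix.one_mul, Matrix.mul_smul, Matrix.smul_mul,
      smul_sub, Matrix.mul_assoc]
    abel
  have hpos : (0 : ℝ) < n := Nat.cast_pos.mpr hn
  rw [hA, hcentered]
  exact ⟨trace_centered_le hpos hee _ b, trace_eq_trace_centered_iff hpos hee _ b⟩
end
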